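/- arXiv:quant-ph/0305154 — 10 statements merged into one kernel-verified Lean document; each statement's English description precedes it below -/
import Mathlib

section
/- Let P_{WZ} be any joint probability distribution on the product of finite nonempty sets W × Z. Then there exists a channel P_{Z̄|WZ} from W × Z to Z such that, for the resulting joint distribution of (W, Z, Z̄), the marginal distribution of Z̄ is the uniform distribution on Z, Z̄ is independent of W (i.e., P_{Z̄W} = P_{Z̄} × P_W), and Pr[Z = Z̄] = 1 − d(Z|W). -/
open Finset

/-- The distance of a distribution `P` on a finite set `Z` from the uniform
distribution: `d(P) = (1/2) ∑_z |P z - 1/|Z||`. -/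
noncomputable def distUnif {Z : Type*} [Fintype Z] (P : Z → ℝ) : ℝ :=
  (1 / 2) * ∑ z, |P z - 1 / (Fintype.card Z : ℝ)|

/-- For a joint distribution `P` on `W × Z` (given as `P : W → Z → ℝ`), the expected
distance of `Z` from uniform given `W`: `d(Z|W) = ∑_w P_W(w) · d(P_{Z|W=w})`.
(Terms with `P_W(w) = 0` vanish.) -/
noncomputable def dCond {W Z : Type*} [Fintype W] [Fintype Z] (P : W → Z → ℝ) : ℝ :=
  ∑ w, (∑ z, P w z) * distUnif (fun z => P w z / ∑ z', P w z')

open scoped Classical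

noncomputable def uZ (Z : Type*) [Fintype Z] : ℝ := 1 / (Fintype.card Z : ℝ)

open scoped Classical in
noncomputable def chan {Z : Type*} [Fintype Z] (p : Z → ℝ) (z z' : Z) : ℝ :=
  if p z = 0 then uZ Z
  else ((if z' = z then min (p z) (uZ Z) else 0) +
      (p z - min (p z) (uZ Z)) * (uZ Z - min (p z') (uZ Z)) /
        (∑ x, (p x - min (p x) (uZ Z)))) / p z

section aux
variable {Z : Type*} [Fintype Z] [Nonempty Z]

lemma uZ_pos : 0 < uZ Z := by
  have : (0:ℝ) < (Fintype.card Z : ℝ) := by exact_mod_cast Fintype.card_pos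
  simp [uZ, this]

lemma card_mul_uZ : (Fintype.card Z : ℝ) * uZ Z = 1 := by
  have h : ((Fintype.card Z : ℝ)) ≠ 0 := by
    exact_mod_cast Fintype.card_pos.ne'
  rw [uZ]; field_simp

lemma sum_uZ : ∑ _z : Z, uZ Z = 1 := by
  have h : ((Fintype.card Z : ℝ)) ≠ 0 := by
    exact_mod_cast Fintype.card_pos.ne'
  rw [Finset.sum_const, card_univ, nsmul_eq_mul, card_mul_uZ]

variable (p : Z → ℝ) (hp0 : ∀ z, 0 ≤ p z) (hp1 : ∑ z, p z = 1)

local notation "m" => fun z => min (p z) (uZ Z)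
local notation "dd" => ∑ x, (p x - min (p x) (uZ Z))

include hp0 in
lemma hd0 : 0 ≤ dd := Finset.sum_nonneg fun x _ => sub_nonneg.2 (min_le_left _ _)

include hp1 in
lemma hsum_m : ∑ z, min (p z) (uZ Z) = 1 - dd := by
  rw [Finset.sum_sub_distrib, hp1]; ring

include hp1 in
lemma hsum_um : ∑ z, (uZ Z - min (p z) (uZ Z)) = dd := by
  rw [Finset.sum_sub_distrib, sum_uZ, hsum_m p hp1]; ring

include hp1 in
lemma d_zero_um (hd : dd = 0) : ∀ z, uZ Z - min (p z) (uZ Z) = 0 := by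
  intro z
  have h := hsum_um p hp1
  rw [hd] at h
  have := (Finset.sum_eq_zero_iff_of_nonneg
    (fun x _ => sub_nonneg.2 (min_le_right (p x) (uZ Z)))).1 h
  exact this z (mem_univ z)

lemma d_zero_pm (hd : dd = 0) : ∀ z, p z - min (p z) (uZ Z) = 0 := by
  intro z
  have := (Finset.sum_eq_zero_iff_of_nonneg
    (fun x _ => sub_nonneg.2 (min_le_left (p x) (uZ Z)))).1 hd
  exact this z (mem_univ z)

include hp0 hp1 in
lemma chan_nonneg : ∀ z z', 0 ≤ chan p z z' := by
  intro z z'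
  unfold chan
  split
  · exact uZ_pos.le
  · rename_i h
    have hpz : 0 < p z := lt_of_le_of_ne (hp0 z) (Ne.symm h)
    apply div_nonneg _ hpz.le
    apply add_nonneg
    · split
      · exact le_min (hp0 z) uZ_pos.le
      · exact le_refl 0
    · exact div_nonneg (mul_nonneg (sub_nonneg.2 (min_le_left _ _))
        (sub_nonneg.2 (min_le_right _ _))) (hd0 p hp0)

include hp0 hp1 in
lemma chan_mul (z z' : Z) : p z * chan p z z' =
    (if z' = z then min (p z) (uZ Z) else 0) +
      (p z - min (p z) (uZ Z)) * (uZ Z - min (p z') (uZ Z)) / dd := by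
  by_cases h : p z = 0
  · have h0 : (0:ℝ) ⊓ uZ Z = 0 := min_eq_left uZ_pos.le
    simp [chan, h, h0]
  · simp only [chan, if_neg h]
    field_simp

include hp0 hp1 in
lemma chan_row : ∀ z, ∑ z', chan p z z' = 1 := by
  intro z
  by_cases h : p z = 0
  · simp [chan, h, card_mul_uZ]
  · have hpz : p z ≠ 0 := h
    have key : ∑ z', (p z - min (p z) (uZ Z)) * (uZ Z - min (p z') (uZ Z)) / dd
        = p z - min (p z) (uZ Z) := by
      by_cases hd : dd = 0
      · simp [hd, d_zero_pm p hd z]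
      · rw [← Finset.sum_div, ← Finset.mul_sum, hsum_um p hp1,
          mul_div_assoc, div_self hd, mul_one]
    have hsum : ∑ z', p z * chan p z z' = p z := by
      simp only [chan_mul p hp0 hp1]
      rw [Finset.sum_add_distrib, key,
        Finset.sum_ite_eq' univ z (fun _ => min (p z) (uZ Z)), if_pos (mem_univ z)]
      ring
    rw [← Finset.mul_sum] at hsum
    have := mul_left_cancel₀ hpz (hsum.trans (mul_one (p z)).symm)
    exact this

include hp0 hp1 in
lemma chan_col : ∀ z', ∑ z, p z * chan p z z' = uZ Z := by
  intro z'
  simp only [chan_mul p hp0 hp1]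
  rw [Finset.sum_add_distrib, Finset.sum_ite_eq univ z' (fun x => min (p x) (uZ Z)),
    if_pos (mem_univ z'), ← Finset.sum_div, ← Finset.sum_mul]
  by_cases hd : dd = 0
  · have h1 := d_zero_um p hp1 hd z'
    have : min (p z') (uZ Z) = uZ Z := by linarith
    simp [hd, this]
  · rw [mul_div_cancel_left₀ _ hd]
    ring

include hp0 hp1 in
lemma chan_diag : ∑ z, p z * chan p z z = 1 - distUnif p := by
  have habs : ∀ z, |p z - uZ Z| =
      (p z - min (p z) (uZ Z)) + (uZ Z - min (p z) (uZ Z)) := by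
    intro z
    rcases le_total (p z) (uZ Z) with h | h
    · rw [min_eq_left h, abs_of_nonpos (by linarith)]; ring
    · rw [min_eq_right h, abs_of_nonneg (by linarith)]; ring
  have hdist : distUnif p = dd := by
    unfold distUnif uZ at *
    simp only [habs]
    rw [Finset.sum_add_distrib]
    have := hsum_um p hp1
    unfold uZ at this
    linarith [this]
  have hzero : ∀ z, (p z - min (p z) (uZ Z)) * (uZ Z - min (p z) (uZ Z)) / dd = 0 := by
    intro z
    rcases le_total (p z) (uZ Z) with h | h
    · rw [min_eq_left h]; simp
    · rw [min_eq_right h]; simp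
  have hite : ∀ z : Z, p z * chan p z z = min (p z) (uZ Z) := by
    intro z
    rw [chan_mul p hp0 hp1, if_pos rfl, hzero z, add_zero]
  rw [Finset.sum_congr rfl fun z _ => hite z, hsum_m p hp1, hdist]

end aux

/-- **Lemma 2 (paper: Lemma `lem:equivb`)**: for any joint distribution `P_{WZ}` there is
a channel `Q = P_{Z̄|WZ}` such that under the joint distribution of `(W, Z, Z̄)`:
the marginal of `Z̄` is uniform on `Z`, `Z̄` is independent of `W`
(`P_{Z̄W} = P_{Z̄} × P_W`), and `Pr[Z = Z̄] = 1 - d(Z|W)`. -/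
theorem lemma_equivb {W Z : Type*} [Fintype W] [Fintype Z] [Nonempty Z]
    (P : W → Z → ℝ) (hP0 : ∀ w z, 0 ≤ P w z) (hP1 : ∑ w, ∑ z, P w z = 1) :
    ∃ Q : W → Z → Z → ℝ,
      (∀ w z z', 0 ≤ Q w z z') ∧
      (∀ w z, ∑ z', Q w z z' = 1) ∧
      (∀ z', ∑ w, ∑ z, P w z * Q w z z' = 1 / (Fintype.card Z : ℝ)) ∧
      (∀ w z', ∑ z, P w z * Q w z z' = (1 / (Fintype.card Z : ℝ)) * (∑ z, P w z)) ∧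
      (∑ w, ∑ z, P w z * Q w z z = 1 - dCond P) := by
  have huZ : (1 / (Fintype.card Z : ℝ)) = uZ Z := rfl
  refine ⟨fun w => if (∑ z, P w z) = 0 then (fun _ _ => uZ Z)
      else chan (fun z => P w z / ∑ z', P w z'), ?_, ?_, ?_, ?_, ?_⟩
  case _ => -- nonneg
    intro w z z'
    by_cases hs : (∑ z, P w z) = 0
    · simp only [hs, if_pos rfl]
      exact uZ_pos.le
    · simp only [if_neg hs]
      have hp0 : ∀ z, 0 ≤ P w z / ∑ z', P w z' :=
        fun z => div_nonneg (hP0 w z) (Finset.sum_nonneg fun x _ => hP0 w x)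
      have hp1 : ∑ z, P w z / ∑ z', P w z' = 1 := by
        rw [← Finset.sum_div, div_self hs]
      exact chan_nonneg _ hp0 hp1 z z'
  case _ => -- rows
    intro w z
    by_cases hs : (∑ z, P w z) = 0
    · simp only [hs, if_pos rfl]
      exact sum_uZ
    · simp only [if_neg hs]
      have hp0 : ∀ z, 0 ≤ P w z / ∑ z', P w z' :=
        fun z => div_nonneg (hP0 w z) (Finset.sum_nonneg fun x _ => hP0 w x)
      have hp1 : ∑ z, P w z / ∑ z', P w z' = 1 := by
        rw [← Finset.sum_div, div_self hs]
      exact chan_row _ hp0 hp1 z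
  all_goals {
    have hcol : ∀ w z', ∑ z, P w z *
        (if (∑ z, P w z) = 0 then (fun _ _ => uZ Z)
          else chan (fun z => P w z / ∑ z', P w z')) z z'
        = uZ Z * (∑ z, P w z) := by
      intro w z'
      by_cases hs : (∑ z, P w z) = 0
      · have hz : ∀ z, P w z = 0 := by
          intro z
          exact (Finset.sum_eq_zero_iff_of_nonneg (fun x _ => hP0 w x)).1 hs z (mem_univ z)
        simp [hs, hz]
      · simp only [if_neg hs]
        have hp0 : ∀ z, 0 ≤ P w z / ∑ z', P w z' :=
          fun z => div_nonneg (hP0 w z) (Finset.sum_nonneg fun x _ => hP0 w x)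
        have hp1 : ∑ z, P w z / ∑ z', P w z' = 1 := by
          rw [← Finset.sum_div, div_self hs]
        have hPz : ∀ z, P w z = (∑ z, P w z) * (P w z / ∑ z', P w z') := by
          intro z
          rw [mul_div_assoc', mul_comm, mul_div_assoc, div_self hs, mul_one]
        calc ∑ z, P w z * chan (fun z => P w z / ∑ z', P w z') z z'
            = ∑ z, (∑ z, P w z) * ((P w z / ∑ z', P w z') *
                chan (fun z => P w z / ∑ z', P w z') z z') := by
              refine Finset.sum_congr rfl fun z _ => ?_
              rw [← mul_assoc, ← hPz z]
          _ = (∑ z, P w z) * ∑ z, (P w z / ∑ z', P w z') *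
                chan (fun z => P w z / ∑ z', P w z') z z' := by rw [Finset.mul_sum]
          _ = uZ Z * (∑ z, P w z) := by
              rw [chan_col _ hp0 hp1 z', mul_comm]
    have hdiag : ∀ w, ∑ z, P w z *
        (if (∑ z, P w z) = 0 then (fun _ _ => uZ Z)
          else chan (fun z => P w z / ∑ z', P w z')) z z
        = (∑ z, P w z) * (1 - distUnif (fun z => P w z / ∑ z', P w z')) := by
      intro w
      by_cases hs : (∑ z, P w z) = 0
      · have hz : ∀ z, P w z = 0 := by
          intro z
          exact (Finset.sum_eq_zero_iff_of_nonneg (fun x _ => hP0 w x)).1 hs z (mem_univ z)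
        simp [hs, hz]
      · simp only [if_neg hs]
        have hp0 : ∀ z, 0 ≤ P w z / ∑ z', P w z' :=
          fun z => div_nonneg (hP0 w z) (Finset.sum_nonneg fun x _ => hP0 w x)
        have hp1 : ∑ z, P w z / ∑ z', P w z' = 1 := by
          rw [← Finset.sum_div, div_self hs]
        have hPz : ∀ z, P w z = (∑ z, P w z) * (P w z / ∑ z', P w z') := by
          intro z
          rw [mul_div_assoc', mul_comm, mul_div_assoc, div_self hs, mul_one]
        calc ∑ z, P w z * chan (fun z => P w z / ∑ z', P w z') z z
            = ∑ z, (∑ z, P w z) * ((P w z / ∑ z', P w z') *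
                chan (fun z => P w z / ∑ z', P w z') z z) := by
              refine Finset.sum_congr rfl fun z _ => ?_
              rw [← mul_assoc, ← hPz z]
          _ = (∑ z, P w z) * ∑ z, (P w z / ∑ z', P w z') *
                chan (fun z => P w z / ∑ z', P w z') z z := by rw [Finset.mul_sum]
          _ = (∑ z, P w z) * (1 - distUnif (fun z => P w z / ∑ z', P w z')) := by
              rw [chan_diag _ hp0 hp1]
    first
    | (intro z'
       rw [huZ, Finset.sum_congr rfl fun w _ => hcol w z', ← Finset.mul_sum, hP1, mul_one])
    | (intro w z'
       rw [huZ]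
       exact hcol w z')
    | (rw [Finset.sum_congr rfl fun w _ => hdiag w]
       unfold dCond
       rw [show ∀ a b : W → ℝ, (∑ w, (a w * (1 - b w))) = ∑ w, (a w - a w * b w) from
         fun a b => Finset.sum_congr rfl fun w _ => by ring]
       rw [Finset.sum_sub_distrib, hP1]) }
end

section
/- Let Z and W be jointly distributed random variables with finite nonempty ranges Z and W. Then the maximal guessing probability satisfies P_guess(Z|W) ≤ 1/|Z| + d(Z|W), and equality holds if |Z| = 2. -/
/-!
Given `W = w`, a channel succeeds with probability at most `max_z P(z|w)`, and guessing a most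
likely value attains this, so `P_guess(Z|W) = ∑_w P_W(w) max_z P(z|w)`. For a distribution `q`
on `Z`, the deviation `t = q - 1/|Z|` sums to zero, so its maximum is at most half its `ℓ¹`
norm: `max q ≤ 1/|Z| + d(q)`. When `|Z| = 2` the deviation takes the values `±d(q)`, so this is
an equality. Averaging over `w` gives the theorem.
-/

open Finset

/-- The maximal guessing probability of `Z` given `W`:
the supremum over all channels `C` from `W` to `Z` of `Pr[C(W) = Z]`. -/
noncomputable def pGuess {W Z : Type*} [Fintype W] [Fintype Z] (P : W → Z → ℝ) : ℝ :=
  sSup {p : ℝ | ∃ C : W → Z → ℝ,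
    (∀ w z, 0 ≤ C w z) ∧ (∀ w, ∑ z, C w z = 1) ∧
    p = ∑ w, ∑ z, P w z * C w z}

section Distribution

variable {Z : Type*} [Fintype Z]

-- Each `(|t z| + t z) / 2` is nonnegative and the `t z` sum to zero.
lemma le_half_sum_abs_of_sum_eq_zero {t : Z → ℝ} (ht : ∑ z, t z = 0) (z₀ : Z) :
    t z₀ ≤ 1 / 2 * ∑ z, |t z| := by
  have hsingle : (|t z₀| + t z₀) / 2 ≤ ∑ z, (|t z| + t z) / 2 :=
    single_le_sum (f := fun z => (|t z| + t z) / 2)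
      (fun z _ => by linarith [neg_abs_le (t z)]) (mem_univ z₀)
  rw [← sum_div, sum_add_distrib, ht] at hsingle
  linarith [le_abs_self (t z₀)]

lemma le_inv_card_add_distUnif {q : Z → ℝ} (hq : ∑ z, q z = 1) (z₀ : Z) :
    q z₀ ≤ 1 / Fintype.card Z + distUnif q := by
  have hcard : (Fintype.card Z : ℝ) ≠ 0 := by
    have := Fintype.card_pos_iff.2 ⟨z₀⟩
    positivity
  have hsum : ∑ z, (q z - 1 / Fintype.card Z) = 0 := by
    simp [sum_sub_distrib, hq, hcard]
  have := le_half_sum_abs_of_sum_eq_zero hsum z₀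
  rw [distUnif]
  linarith

lemma eq_inv_card_add_distUnif_of_card_eq_two (hZ : Fintype.card Z = 2) {q : Z → ℝ}
    (hq : ∑ z, q z = 1) {z₀ : Z} (hmax : ∀ z, q z ≤ q z₀) :
    q z₀ = 1 / Fintype.card Z + distUnif q := by
  classical
  obtain ⟨z₁, hz₁⟩ : ∃ z₁, univ.erase z₀ = {z₁} := by
    rw [← card_eq_one, card_erase_of_mem (mem_univ z₀), card_univ, hZ]
  have hpair : ∀ f : Z → ℝ, ∑ z, f z = f z₀ + f z₁ := fun f => by
    rw [← add_sum_erase univ f (mem_univ z₀), hz₁, sum_singleton]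
  rw [hpair] at hq
  have := hmax z₁
  rw [distUnif, hpair, hZ, abs_of_nonneg (by linarith), abs_of_nonpos (by linarith)]
  push_cast
  linarith

lemma le_sum_mul_inv_card_add_distUnif {p : Z → ℝ} (hp : ∀ z, 0 ≤ p z) (z₀ : Z) :
    p z₀ ≤ (∑ z, p z) * (1 / Fintype.card Z + distUnif fun z => p z / ∑ z', p z') := by
  rcases (sum_nonneg fun z (_ : z ∈ univ) => hp z).eq_or_lt with hs | hs
  · rw [← hs, zero_mul, (sum_eq_zero_iff_of_nonneg fun z _ => hp z).1 hs.symm z₀ (mem_univ z₀)]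
  · calc p z₀ = (∑ z, p z) * (p z₀ / ∑ z', p z') := by field_simp
      _ ≤ _ := by
        gcongr
        exact le_inv_card_add_distUnif (by rw [← sum_div, div_self hs.ne']) z₀

lemma eq_sum_mul_inv_card_add_distUnif_of_card_eq_two (hZ : Fintype.card Z = 2) {p : Z → ℝ}
    (hp : ∀ z, 0 ≤ p z) {z₀ : Z} (hmax : ∀ z, p z ≤ p z₀) :
    p z₀ = (∑ z, p z) * (1 / Fintype.card Z + distUnif fun z => p z / ∑ z', p z') := by
  rcases (sum_nonneg fun z (_ : z ∈ univ) => hp z).eq_or_lt with hs | hs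
  · rw [← hs, zero_mul, (sum_eq_zero_iff_of_nonneg fun z _ => hp z).1 hs.symm z₀ (mem_univ z₀)]
  · calc p z₀ = (∑ z, p z) * (p z₀ / ∑ z', p z') := by field_simp
      _ = _ := by
        congr 1
        exact eq_inv_card_add_distUnif_of_card_eq_two hZ (by rw [← sum_div, div_self hs.ne'])
          fun z => div_le_div_of_nonneg_right (hmax z) hs.le

end Distribution

lemma pGuess_eq_sum_of_le {W Z : Type*} [Fintype W] [Fintype Z] (P : W → Z → ℝ) (zm : W → Z)
    (hzm : ∀ w z, P w z ≤ P w (zm w)) :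
    pGuess P = ∑ w, P w (zm w) := by
  classical
  refine IsGreatest.csSup_eq ⟨⟨fun w z => if z = zm w then 1 else 0, fun w z => by positivity,
    fun w => by simp, by simp⟩, ?_⟩
  rintro _ ⟨C, hC0, hC1, rfl⟩
  refine sum_le_sum fun w _ => ?_
  calc ∑ z, P w z * C w z ≤ ∑ z, P w (zm w) * C w z :=
        sum_le_sum fun z _ => mul_le_mul_of_nonneg_right (hzm w z) (hC0 w z)
    _ = P w (zm w) := by rw [← mul_sum, hC1, mul_one]

/-- **Lemma 3 (paper: Lemma `lem:guessb`)**: for jointly distributed `Z` and `W`,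
`P_guess(Z|W) ≤ 1/|Z| + d(Z|W)`, with equality when `Z` is binary. -/
theorem lemma_guessb {W Z : Type*} [Fintype W] [Fintype Z] [Nonempty Z]
    (P : W → Z → ℝ) (hP0 : ∀ w z, 0 ≤ P w z) (hP1 : ∑ w, ∑ z, P w z = 1) :
    pGuess P ≤ 1 / (Fintype.card Z : ℝ) + dCond P ∧
      (Fintype.card Z = 2 → pGuess P = 1 / (Fintype.card Z : ℝ) + dCond P) := by
  choose zm hzm using fun w => Finite.exists_max (P w)
  have hbound : ∑ w, (∑ z, P w z) * (1 / Fintype.card Z + distUnif fun z => P w z / ∑ z', P w z')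
      = 1 / Fintype.card Z + dCond P := by
    simp only [mul_add, sum_add_distrib, ← sum_mul, hP1, one_mul, dCond]
  rw [pGuess_eq_sum_of_le P zm hzm, ← hbound]
  exact ⟨sum_le_sum fun w _ => le_sum_mul_inv_card_add_distUnif (hP0 w) (zm w),
    fun hZ => sum_congr rfl fun w _ => eq_sum_mul_inv_card_add_distUnif_of_card_eq_two hZ (hP0 w)
      (hzm w)⟩
end

section
/- (Helstrom) Let ρ₀ and ρ₁ be density matrices on ℂ^d, let q ∈ [0,1], and let μ₁, …, μ_d be the eigenvalues of the Hermitian matrix Λ := q·ρ₀ − (1−q)·ρ₁. Then the supremum, over all pairs (E₀, E₁) of positive semidefinite complex d×d matrices with E₀ + E₁ = I, of q·tr(E₀ρ₀) + (1−q)·tr(E₁ρ₁) equals 1/2 + (1/2)·Σ_{i=1}^d |μ_i|. -/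
/-!
Writing `E₁ = 1 - E₀`, the success probability is `(1 - q) + tr(E₀ Λ)`, and `tr Λ = 2q - 1`.
In an eigenbasis of `Λ` the functional `E₀ ↦ tr(E₀ Λ)` only sees the diagonal entries of `E₀`,
which lie in `[0, 1]` because `0 ≤ E₀ ≤ 1`; hence it is at most `∑ μᵢ⁺`, with equality for the
projection onto the positive eigenspace. Finally `(1 - q) + ∑ μᵢ⁺ = 1/2 + (1/2) ∑ |μᵢ|`.
-/

open Finset ComplexOrder

open scoped PosPart

lemma Finset.two_mul_sum_posPart {ι : Type*} (s : Finset ι) (f : ι → ℝ) :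
    2 * ∑ i ∈ s, (f i)⁺ = ∑ i ∈ s, f i + ∑ i ∈ s, |f i| := by
  simp only [mul_sum, ← sum_add_distrib, add_abs_eq_two_nsmul_posPart, nsmul_eq_mul,
    Nat.cast_ofNat]

namespace Matrix

lemma trace_mul_add_trace_mul_of_add_eq_one {n R : Type*} [Fintype n] [DecidableEq n] [CommRing R]
    {E₀ E₁ ρ₀ ρ₁ : Matrix n n R} (h : E₀ + E₁ = 1) (hρ₁ : ρ₁.trace = 1) (a b : R) :
    a * (E₀ * ρ₀).trace + b * (E₁ * ρ₁).trace = b + (E₀ * (a • ρ₀ - b • ρ₁)).trace := by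
  rw [eq_sub_of_add_eq' h, Matrix.sub_mul, Matrix.one_mul, trace_sub, hρ₁, Matrix.mul_sub,
    Matrix.mul_smul, Matrix.mul_smul, trace_sub, trace_smul, trace_smul, smul_eq_mul, smul_eq_mul]
  ring

open Unitary

variable {n 𝕜 : Type*} [RCLike 𝕜] [DecidableEq n]

lemma PosSemidef.re_diag_le_one_of_add_eq_one {W V : Matrix n n 𝕜} (hV : V.PosSemidef)
    (h : W + V = 1) (i : n) : RCLike.re (W i i) ≤ 1 := by
  have hsum : RCLike.re (W i i) + RCLike.re (V i i) = 1 := by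
    simpa using congr_arg RCLike.re (congr_fun₂ h i i)
  linarith [(RCLike.nonneg_iff.mp (hV.diag_nonneg (i := i))).1]

variable [Fintype n]

lemma trace_conjStarAlgAut (u : unitary (Matrix n n 𝕜)) (X : Matrix n n 𝕜) :
    (conjStarAlgAut 𝕜 _ u X).trace = X.trace := by
  rw [conjStarAlgAut_apply, trace_mul_cycle, coe_star_mul_self, one_mul]

lemma PosSemidef.conjStarAlgAut {X : Matrix n n 𝕜} (hX : X.PosSemidef)
    (u : unitary (Matrix n n 𝕜)) : (conjStarAlgAut 𝕜 _ u X).PosSemidef :=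
  hX.mul_mul_conjTranspose_same (u : Matrix n n 𝕜)

lemma PosSemidef.re_trace_mul_diagonal_le {W V : Matrix n n 𝕜} (hW : W.PosSemidef)
    (hV : V.PosSemidef) (h : W + V = 1) (μ : n → ℝ) :
    RCLike.re (W * diagonal (RCLike.ofReal ∘ μ)).trace ≤ ∑ i, (μ i)⁺ := by
  simp only [trace, diag, mul_diagonal, Function.comp_apply, map_sum, RCLike.re_mul_ofReal]
  refine sum_le_sum fun i _ => ?_
  have hr0 := (RCLike.nonneg_iff.mp (hW.diag_nonneg (i := i))).1
  have hr1 := hV.re_diag_le_one_of_add_eq_one h i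
  rcases le_total 0 (μ i) with hμ | hμ
  · rw [posPart_eq_self.mpr hμ]; nlinarith
  · rw [posPart_eq_zero.mpr hμ]; nlinarith

namespace IsHermitian

variable {A : Matrix n n 𝕜} (hA : A.IsHermitian)

lemma re_trace_mul_le_sum_posPart_eigenvalues {E F : Matrix n n 𝕜} (hE : E.PosSemidef)
    (hF : F.PosSemidef) (h : E + F = 1) :
    RCLike.re (E * A).trace ≤ ∑ i, (hA.eigenvalues i)⁺ := by
  set ψ := conjStarAlgAut 𝕜 _ (star hA.eigenvectorUnitary)
  have hψ : ψ E + ψ F = 1 := by rw [← map_add, h, map_one]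
  rw [← trace_conjStarAlgAut (star hA.eigenvectorUnitary), map_mul,
    hA.conjStarAlgAut_star_eigenvectorUnitary]
  exact (hE.conjStarAlgAut _).re_trace_mul_diagonal_le (hF.conjStarAlgAut _) hψ _

lemma exists_trace_mul_eq_sum_posPart_eigenvalues :
    ∃ E F : Matrix n n 𝕜, E.PosSemidef ∧ F.PosSemidef ∧ E + F = 1 ∧
      (E * A).trace = ∑ i, (((hA.eigenvalues i)⁺ : ℝ) : 𝕜) := by
  set φ := conjStarAlgAut 𝕜 _ hA.eigenvectorUnitary
  set c : n → ℝ := fun i => if 0 < hA.eigenvalues i then 1 else 0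
  refine ⟨φ (diagonal (RCLike.ofReal ∘ c)), φ (diagonal (RCLike.ofReal ∘ (1 - c))), ?_, ?_, ?_, ?_⟩
  · refine (PosSemidef.diagonal fun i => ?_).conjStarAlgAut _
    simp only [Function.comp_apply, Pi.zero_apply, RCLike.ofReal_nonneg, c]
    split_ifs <;> norm_num
  · refine (PosSemidef.diagonal fun i => ?_).conjStarAlgAut _
    simp only [Function.comp_apply, Pi.zero_apply, Pi.sub_apply, Pi.one_apply,
      RCLike.ofReal_nonneg, c]
    split_ifs <;> norm_num
  · rw [← map_add, diagonal_add, ← map_one φ, ← diagonal_one]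
    congr 2
    ext i
    simp
  · conv_lhs => rw [hA.spectral_theorem]
    rw [← map_mul, trace_conjStarAlgAut, diagonal_mul_diagonal, trace_diagonal]
    refine sum_congr rfl fun i _ => ?_
    simp only [Function.comp_apply, ← RCLike.ofReal_mul, c]
    congr 1
    split_ifs with hμ
    · rw [one_mul, posPart_eq_self.mpr hμ.le]
    · rw [zero_mul, posPart_eq_zero.mpr (not_lt.mp hμ)]

end IsHermitian

end Matrix

theorem helstrom_general {d : ℕ} (q : ℝ)
    (ρ₀ ρ₁ : Matrix (Fin d) (Fin d) ℂ)
    (h0t : ρ₀.trace = 1)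
    (h1t : ρ₁.trace = 1)
    (hΛ : ((q : ℂ) • ρ₀ - ((1 - q : ℝ) : ℂ) • ρ₁).IsHermitian) :
    sSup {p : ℝ | ∃ E₀ E₁ : Matrix (Fin d) (Fin d) ℂ,
        E₀.PosSemidef ∧ E₁.PosSemidef ∧ E₀ + E₁ = 1 ∧
        (p : ℂ) = (q : ℂ) * (E₀ * ρ₀).trace + ((1 - q : ℝ) : ℂ) * (E₁ * ρ₁).trace}
      = 1 / 2 + (1 / 2) * ∑ i, |hΛ.eigenvalues i| := by
  have hsum : ∑ i, hΛ.eigenvalues i = 2 * q - 1 := by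
    have htr := congr_arg Complex.re hΛ.trace_eq_sum_eigenvalues
    simp only [Matrix.trace_sub, Matrix.trace_smul, h0t, h1t, smul_eq_mul, mul_one,
      Complex.sub_re, Complex.ofReal_re, Complex.re_sum, Complex.coe_algebraMap] at htr
    linarith
  have hvalue : 1 / 2 + (1 / 2) * ∑ i, |hΛ.eigenvalues i| = (1 - q) + ∑ i, (hΛ.eigenvalues i)⁺ := by
    linarith [two_mul_sum_posPart univ hΛ.eigenvalues]
  refine IsGreatest.csSup_eq ⟨?_, ?_⟩
  · obtain ⟨E₀, E₁, hE₀, hE₁, h, htr⟩ := hΛ.exists_trace_mul_eq_sum_posPart_eigenvalues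
    refine ⟨E₀, E₁, hE₀, hE₁, h, ?_⟩
    rw [Matrix.trace_mul_add_trace_mul_of_add_eq_one h h1t, htr, hvalue]
    push_cast
    rfl
  · rintro p ⟨E₀, E₁, hE₀, hE₁, h, hp⟩
    rw [Matrix.trace_mul_add_trace_mul_of_add_eq_one h h1t] at hp
    have hbound := hΛ.re_trace_mul_le_sum_posPart_eigenvalues hE₀ hE₁ h
    have hre := congr_arg Complex.re hp
    simp only [Complex.ofReal_re, Complex.add_re] at hre
    rw [RCLike.re_to_complex] at hbound
    rw [hvalue]
    linarith

/-- **Helstrom's theorem (paper: Theorem `thm:helstrom`)**: for density matrices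
`ρ₀, ρ₁` on `ℂ^d`, `q ∈ [0,1]`, and `μ₁,…,μ_d` the eigenvalues of the Hermitian matrix
`Λ := q•ρ₀ - (1-q)•ρ₁`, the supremum over all binary POVMs `(E₀,E₁)` (pairs of positive
semidefinite matrices with `E₀ + E₁ = I`) of `q·tr(E₀ρ₀) + (1-q)·tr(E₁ρ₁)` is
`1/2 + (1/2)·∑ᵢ|μᵢ|`. -/
theorem helstrom {d : ℕ} (q : ℝ) (hq0 : 0 ≤ q) (hq1 : q ≤ 1)
    (ρ₀ ρ₁ : Matrix (Fin d) (Fin d) ℂ)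
    (h0 : ρ₀.PosSemidef) (h0t : ρ₀.trace = 1)
    (h1 : ρ₁.PosSemidef) (h1t : ρ₁.trace = 1)
    (hΛ : ((q : ℂ) • ρ₀ - ((1 - q : ℝ) : ℂ) • ρ₁).IsHermitian) :
    sSup {p : ℝ | ∃ E₀ E₁ : Matrix (Fin d) (Fin d) ℂ,
        E₀.PosSemidef ∧ E₁.PosSemidef ∧ E₀ + E₁ = 1 ∧
        (p : ℂ) = (q : ℂ) * (E₀ * ρ₀).trace + ((1 - q : ℝ) : ℂ) * (E₁ * ρ₁).trace}
      = 1 / 2 + (1 / 2) * ∑ i, |hΛ.eigenvalues i| :=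
  helstrom_general q ρ₀ ρ₁ h0t h1t hΛ
end

section
/- Let X be a random variable with distribution P_X on a finite set 𝒳, let F be a random predicate on 𝒳 independent of X, and let {ρ_x}_{x∈𝒳} be a family of density matrices on ℂ^d. For each predicate f : 𝒳 → {0,1}, let μ^f_1, …, μ^f_d be the eigenvalues of the Hermitian matrix Λ_f := Σ_{x : f(x)=0} P_X(x)·ρ_x − Σ_{x : f(x)=1} P_X(x)·ρ_x. Then d(F(X)|⟨ρ_X,F⟩) = (1/2)·Σ_f P_F(f)·Σ_{j=1}^d |μ^f_j|. -/
/-! For a fixed predicate `f` and a measurement `{E_w}`, the joint weights satisfy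
`P(f X = 0, W = w) - P(f X = 1, W = w) = tr(E_w Λ_f)`,
so `d(f(X)|W) = ½ ∑_w |tr(E_w Λ_f)|`.
In an eigenbasis of `Λ_f` the diagonals of the `E_w` are nonnegative and sum to `1` in every
coordinate, so `∑_w |tr(E_w Λ_f)| ≤ ∑_j |μ_j|`; equality holds for the two spectral
projections onto the nonnegative and the negative eigenvalues of `Λ_f` (Helstrom's measurement). -/

open Finset ComplexOrder

/-- A POVM on `ℂ^d` with an arbitrary finite outcome set: a family `{E_w}` of positive
semidefinite `d×d` complex matrices summing to the identity. -/
structure POVM (d : ℕ) where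
  ι : Type
  [fin : Fintype ι]
  E : ι → Matrix (Fin d) (Fin d) ℂ
  psd : ∀ w, (E w).PosSemidef
  sum_eq : ∑ w, E w = 1

attribute [instance] POVM.fin

/-- Given `X` with distribution `PX` on `𝒳`, a family `{ρ_x}` of density matrices on
`ℂ^d`, and a function `g : 𝒳 → 𝒵`, the distance of `g(X)` from uniform given `ρ_X`:
the supremum over all POVMs `{E_w}` (with arbitrary finite outcome sets) of
`d(g(X)|W)`, where `W` is the measurement outcome, with joint distribution
`P_{X W}(x,w) = PX x · tr(E_w ρ_x)`. -/
noncomputable def dQuant {d : ℕ} {𝒳 𝒵 : Type} [Fintype 𝒳] [Fintype 𝒵] [DecidableEq 𝒵]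
    (PX : 𝒳 → ℝ) (ρ : 𝒳 → Matrix (Fin d) (Fin d) ℂ) (g : 𝒳 → 𝒵) : ℝ :=
  sSup {r : ℝ | ∃ M : POVM d,
    r = dCond (fun (w : M.ι) (z : 𝒵) =>
      ∑ x ∈ univ.filter (fun x => g x = z), PX x * ((M.E w) * ρ x).trace.re)}

namespace Matrix

lemma PosSemidef.re_diag_nonneg {n : Type*} {A : Matrix n n ℂ} (hA : A.PosSemidef) (i : n) :
    0 ≤ (A i i).re :=
  (Complex.nonneg_iff.mp hA.diag_nonneg).1

lemma re_trace_mul_sum_ofReal_smul {n ι : Type*} [Fintype n]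
    (A : Matrix n n ℂ) (s : Finset ι) (c : ι → ℝ) (B : ι → Matrix n n ℂ) :
    (A * ∑ x ∈ s, (c x : ℂ) • B x).trace.re = ∑ x ∈ s, c x * (A * B x).trace.re := by
  simp [Matrix.mul_sum, Matrix.trace_sum, Complex.re_sum]

variable {n : Type*} [Fintype n] [DecidableEq n]

namespace IsHermitian

variable {Λ : Matrix n n ℂ} (hΛ : Λ.IsHermitian)

local notation "U" => (hΛ.eigenvectorUnitary : Matrix n n ℂ)

lemma re_trace_mul_eq_sum (A : Matrix n n ℂ) :
    (A * Λ).trace.re = ∑ j, ((star U * A * U) j j).re * hΛ.eigenvalues j := by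
  conv_lhs => rw [hΛ.spectral_theorem, Unitary.conjStarAlgAut_apply]
  rw [← Matrix.mul_assoc, ← Matrix.mul_assoc, Matrix.trace_mul_comm, ← Matrix.mul_assoc,
    ← Matrix.mul_assoc]
  simp [Matrix.trace, Matrix.mul_diagonal, Complex.re_sum]

lemma sum_abs_re_trace_mul_le {ι : Type*} [Fintype ι] (E : ι → Matrix n n ℂ)
    (hE : ∀ w, (E w).PosSemidef) (hE_sum : ∑ w, E w = 1) :
    ∑ w, |(E w * Λ).trace.re| ≤ ∑ j, |hΛ.eigenvalues j| := by
  set C : ι → Matrix n n ℂ := fun w => star U * E w * U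
  have hC_sum (j : n) : ∑ w, (C w j j).re = 1 := by
    have : ∑ w, C w = 1 := by
      simp only [C, ← Finset.sum_mul, ← Finset.mul_sum, hE_sum, Matrix.mul_one]
      exact Unitary.coe_star_mul_self _
    simpa [Matrix.sum_apply, Complex.re_sum] using
      congrArg (fun M : Matrix n n ℂ => (M j j).re) this
  have hC_nonneg (w : ι) (j : n) : 0 ≤ (C w j j).re :=
    ((hE w).conjTranspose_mul_mul_same U).re_diag_nonneg j
  calc ∑ w, |(E w * Λ).trace.re|
      ≤ ∑ w, ∑ j, (C w j j).re * |hΛ.eigenvalues j| := by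
        gcongr with w
        rw [hΛ.re_trace_mul_eq_sum]
        refine (Finset.abs_sum_le_sum_abs _ _).trans_eq (Finset.sum_congr rfl fun j _ => ?_)
        rw [abs_mul, abs_of_nonneg (hC_nonneg w j)]
    _ = ∑ j, |hΛ.eigenvalues j| := by
        simp_rw [Finset.sum_comm (γ := ι), ← Finset.sum_mul, hC_sum, one_mul]

noncomputable def signProjection (b : Bool) : Matrix n n ℂ :=
  U * diagonal (fun j => if decide (0 ≤ hΛ.eigenvalues j) = b then 1 else 0) * star U

lemma star_mul_signProjection_mul (b : Bool) :
    star U * hΛ.signProjection b * U =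
      diagonal (fun j => if decide (0 ≤ hΛ.eigenvalues j) = b then 1 else 0) := by
  have hU : star U * U = 1 := Unitary.coe_star_mul_self _
  simp only [signProjection, Matrix.mul_assoc, hU, Matrix.mul_one]
  rw [← Matrix.mul_assoc, hU, Matrix.one_mul]

lemma signProjection_posSemidef (b : Bool) : (hΛ.signProjection b).PosSemidef := by
  refine (PosSemidef.diagonal fun j => ?_).mul_mul_conjTranspose_same U
  split_ifs <;> norm_num

lemma sum_signProjection : ∑ b, hΛ.signProjection b = 1 := by
  have h : (fun j => (if decide (0 ≤ hΛ.eigenvalues j) = true then 1 else 0) +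
      (if decide (0 ≤ hΛ.eigenvalues j) = false then 1 else 0) : n → ℂ) = fun _ => 1 := by
    funext j
    by_cases h0 : 0 ≤ hΛ.eigenvalues j <;> simp [h0]
  rw [Fintype.sum_bool, signProjection, signProjection, ← Matrix.add_mul, ← Matrix.mul_add,
    diagonal_add, h, diagonal_one, Matrix.mul_one]
  exact Unitary.coe_mul_star_self _

lemma re_trace_signProjection_mul (b : Bool) :
    (hΛ.signProjection b * Λ).trace.re =
      ∑ j, if decide (0 ≤ hΛ.eigenvalues j) = b then hΛ.eigenvalues j else 0 := by
  rw [hΛ.re_trace_mul_eq_sum, star_mul_signProjection_mul]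
  refine Finset.sum_congr rfl fun j _ => ?_
  split_ifs <;> simp [*]

lemma sum_abs_re_trace_signProjection_mul :
    ∑ b, |(hΛ.signProjection b * Λ).trace.re| = ∑ j, |hΛ.eigenvalues j| := by
  simp only [Fintype.sum_bool, re_trace_signProjection_mul, decide_eq_true_eq,
    decide_eq_false_iff_not]
  rw [abs_of_nonneg (Finset.sum_nonneg fun j _ => by split_ifs <;> linarith),
    abs_of_nonpos (Finset.sum_nonpos fun j _ => by split_ifs <;> linarith),
    ← sub_eq_add_neg, ← Finset.sum_sub_distrib]
  refine Finset.sum_congr rfl fun j _ => ?_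
  split_ifs with h
  · rw [sub_zero, abs_of_nonneg h]
  · rw [zero_sub, abs_of_neg (not_le.mp h)]

end IsHermitian

lemma PosSemidef.re_trace_mul_nonneg {A B : Matrix n n ℂ} (hA : A.PosSemidef)
    (hB : B.PosSemidef) : 0 ≤ (A * B).trace.re := by
  rw [hB.isHermitian.re_trace_mul_eq_sum]
  exact Finset.sum_nonneg fun j _ => mul_nonneg
    ((hA.conjTranspose_mul_mul_same _).re_diag_nonneg j) (hB.eigenvalues_nonneg j)

end Matrix

noncomputable def POVM.sign {d : ℕ} {Λ : Matrix (Fin d) (Fin d) ℂ} (hΛ : Λ.IsHermitian) :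
    POVM d where
  ι := Bool
  E := hΛ.signProjection
  psd := hΛ.signProjection_posSemidef
  sum_eq := hΛ.sum_signProjection

lemma mul_distUnif_div_sum_bool (P : Bool → ℝ) (hP : ∀ z, 0 ≤ P z) :
    (∑ z, P z) * distUnif (fun z => P z / ∑ z', P z') = (1 / 2) * |P false - P true| := by
  simp only [distUnif, Fintype.sum_bool, Fintype.card_bool, Nat.cast_ofNat]
  set a := P true
  set b := P false
  have ha : 0 ≤ a := hP true
  have hb : 0 ≤ b := hP false
  rcases (add_nonneg ha hb).eq_or_lt with hs | hs
  · have hab : a = 0 ∧ b = 0 := ⟨by linarith, by linarith⟩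
    simp [hab]
  · rw [show a / (a + b) - 1 / 2 = -((b - a) / (2 * (a + b))) by field_simp; ring,
      show b / (a + b) - 1 / 2 = (b - a) / (2 * (a + b)) by field_simp; ring,
      abs_neg, abs_div, abs_of_pos (by positivity : (0 : ℝ) < 2 * (a + b))]
    field_simp
    ring

lemma dCond_bool {W : Type*} [Fintype W] (P : W → Bool → ℝ) (hP : ∀ w z, 0 ≤ P w z) :
    dCond P = (1 / 2) * ∑ w, |P w false - P w true| := by
  rw [dCond, Finset.mul_sum]
  exact Finset.sum_congr rfl fun w _ => mul_distUnif_div_sum_bool (P w) (hP w)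

section Predicate

variable {d : ℕ} {𝒳 : Type} [Fintype 𝒳]
  (PX : 𝒳 → ℝ) (ρ : 𝒳 → Matrix (Fin d) (Fin d) ℂ) (f : 𝒳 → Bool)

/-- The matrix `Λ_f`. -/
noncomputable def signedMixture : Matrix (Fin d) (Fin d) ℂ :=
  ∑ x ∈ univ.filter (fun x => f x = false), (PX x : ℂ) • ρ x
    - ∑ x ∈ univ.filter (fun x => f x = true), (PX x : ℂ) • ρ x

lemma dCond_predicate_eq (hPX0 : ∀ x, 0 ≤ PX x) (hρ : ∀ x, (ρ x).PosSemidef) (M : POVM d) :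
    dCond (fun (w : M.ι) (z : Bool) =>
        ∑ x ∈ univ.filter (fun x => f x = z), PX x * ((M.E w) * ρ x).trace.re) =
      (1 / 2) * ∑ w, |(M.E w * signedMixture PX ρ f).trace.re| := by
  rw [dCond_bool _ fun w z => Finset.sum_nonneg fun x _ =>
    mul_nonneg (hPX0 x) ((M.psd w).re_trace_mul_nonneg (hρ x))]
  simp only [signedMixture, Matrix.mul_sub, Matrix.trace_sub, Complex.sub_re,
    Matrix.re_trace_mul_sum_ofReal_smul]

lemma dQuant_predicate_eq (hPX0 : ∀ x, 0 ≤ PX x) (hρ : ∀ x, (ρ x).PosSemidef)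
    (hΛ : (signedMixture PX ρ f).IsHermitian) :
    dQuant PX ρ f = (1 / 2) * ∑ j, |hΛ.eigenvalues j| := by
  refine IsGreatest.csSup_eq ⟨⟨POVM.sign hΛ, ?_⟩, ?_⟩
  · rw [dCond_predicate_eq PX ρ f hPX0 hρ]
    exact congrArg _ (hΛ.sum_abs_re_trace_signProjection_mul).symm
  · rintro r ⟨M, rfl⟩
    rw [dCond_predicate_eq PX ρ f hPX0 hρ]
    gcongr
    exact hΛ.sum_abs_re_trace_mul_le M.E M.psd M.sum_eq

end Predicate

theorem lemma_eigenvaluessum_general {d : ℕ} {𝒳 : Type} [Fintype 𝒳] [DecidableEq 𝒳]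
    (PX : 𝒳 → ℝ) (hPX0 : ∀ x, 0 ≤ PX x)
    (PF : (𝒳 → Bool) → ℝ)
    (ρ : 𝒳 → Matrix (Fin d) (Fin d) ℂ)
    (hρ : ∀ x, (ρ x).PosSemidef)
    (hΛ : ∀ f : 𝒳 → Bool,
      (∑ x ∈ univ.filter (fun x => f x = false), (PX x : ℂ) • ρ x
        - ∑ x ∈ univ.filter (fun x => f x = true), (PX x : ℂ) • ρ x).IsHermitian) :
    ∑ f, PF f * dQuant PX ρ f
      = (1 / 2) * ∑ f, PF f * ∑ j, |(hΛ f).eigenvalues j| := by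
  rw [Finset.mul_sum]
  refine Finset.sum_congr rfl fun f _ => ?_
  rw [dQuant_predicate_eq PX ρ f hPX0 hρ (hΛ f), mul_left_comm]
  rfl

/-- **Lemma `lem:eigenvaluessum`**: for a random variable `X` with distribution `PX` on
a finite set `𝒳`, a random predicate `F` (distribution `PF` on functions `𝒳 → {0,1}`,
independent of `X`), and a family `{ρ_x}` of density matrices on `ℂ^d`,
`d(F(X)|⟨ρ_X,F⟩) = (1/2) ∑_f P_F(f) ∑_j |μ^f_j|`, where `μ^f_j` are the eigenvalues of
the Hermitian matrix `Λ_f = ∑_{x : f(x)=0} P_X(x)·ρ_x - ∑_{x : f(x)=1} P_X(x)·ρ_x`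
(the value `0` of a predicate is identified with `false`, the value `1` with `true`). -/
theorem lemma_eigenvaluessum {d : ℕ} {𝒳 : Type} [Fintype 𝒳] [DecidableEq 𝒳]
    (PX : 𝒳 → ℝ) (hPX0 : ∀ x, 0 ≤ PX x) (hPX1 : ∑ x, PX x = 1)
    (PF : (𝒳 → Bool) → ℝ) (hPF0 : ∀ f, 0 ≤ PF f) (hPF1 : ∑ f, PF f = 1)
    (ρ : 𝒳 → Matrix (Fin d) (Fin d) ℂ)
    (hρ : ∀ x, (ρ x).PosSemidef) (hρt : ∀ x, (ρ x).trace = 1)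
    (hΛ : ∀ f : 𝒳 → Bool,
      (∑ x ∈ univ.filter (fun x => f x = false), (PX x : ℂ) • ρ x
        - ∑ x ∈ univ.filter (fun x => f x = true), (PX x : ℂ) • ρ x).IsHermitian) :
    ∑ f, PF f * dQuant PX ρ f
      = (1 / 2) * ∑ f, PF f * ∑ j, |(hΛ f).eigenvalues j| :=
  lemma_eigenvaluessum_general PX hPX0 PF ρ hρ hΛ
end

section
/- Let X be uniformly distributed on {0,1}² and let F be a uniform balanced random predicate on {0,1}², independent of X. Then for every channel P_{S|X} from {0,1}² to {0,1}, the resulting jointly distributed random variables satisfy d(F(X)|S F) ≤ 1/4, where d(F(X)|S F) := Σ_{s,f} P_S(s)·P_F(f)·d(P_{F(X)|S=s,F=f}). -/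
open Finset

/-- The balanced predicates on `{0,1}²` (predicates taking each of the two values on
exactly half of the domain); `{0,1}` is identified with `Bool`. -/
def Bal : Finset ((Bool × Bool) → Bool) :=
  univ.filter (fun f =>
    (univ.filter (fun x => f x = false)).card = (univ.filter (fun x => f x = true)).card)

/-- The distribution of a uniform balanced random predicate on `{0,1}²`. -/
noncomputable def PF (f : (Bool × Bool) → Bool) : ℝ :=
  if f ∈ Bal then (Bal.card : ℝ)⁻¹ else 0

lemma key (q : Bool → ℝ) (h0 : 0 ≤ q false) (h1 : 0 ≤ q true) :
    (∑ z, q z) * distUnif (fun z => q z / ∑ z', q z') = |q true - q false| / 2 := by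
  rw [Fintype.sum_bool] at *
  by_cases hT : q true + q false = 0
  · have h1' : q true = 0 := by linarith [abs_nonneg (q true)]
    have h0' : q false = 0 := by linarith
    simp [distUnif, h1', h0']
  · have hT' : 0 < q true + q false := lt_of_le_of_ne (by linarith) (Ne.symm hT)
    rw [distUnif, Fintype.sum_bool]
    have c2 : (Fintype.card Bool : ℝ) = 2 := by simp
    rw [c2]
    have e1 : q true / (q true + q false) - 1/2 = (q true - q false) / (2*(q true + q false)) := by
      field_simp; ring
    have e2 : q false / (q true + q false) - 1/2 = -((q true - q false) / (2*(q true + q false))) := by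
      field_simp; ring
    rw [e1, e2, abs_neg, abs_div, abs_of_pos (by linarith : (0:ℝ) < 2*(q true + q false))]
    field_simp; ring

set_option maxHeartbeats 1000000 in
lemma six (a b c d : ℝ) (ha0 : 0 ≤ a) (ha1 : a ≤ 1) (hb0 : 0 ≤ b) (hb1 : b ≤ 1)
    (hc0 : 0 ≤ c) (hc1 : c ≤ 1) (hd0 : 0 ≤ d) (hd1 : d ≤ 1) :
    |1/4*d*(1/6) + 1/4*c*(1/6) - (1/4*b*(1/6) + 1/4*a*(1/6))|/2
    + (|1/4*b*(1/6) + 1/4*a*(1/6) - (1/4*d*(1/6) + 1/4*c*(1/6))|/2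
    + (|1/4*d*(1/6) + 1/4*b*(1/6) - (1/4*c*(1/6) + 1/4*a*(1/6))|/2
    + (|1/4*c*(1/6) + 1/4*a*(1/6) - (1/4*d*(1/6) + 1/4*b*(1/6))|/2
    + (|1/4*c*(1/6) + 1/4*b*(1/6) - (1/4*d*(1/6) + 1/4*a*(1/6))|/2
    + |1/4*d*(1/6) + 1/4*a*(1/6) - (1/4*c*(1/6) + 1/4*b*(1/6))|/2)))) ≤ 1/8 := by
  rw [abs_sub_comm (1/4*b*(1/6) + 1/4*a*(1/6)) (1/4*d*(1/6) + 1/4*c*(1/6)),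
      abs_sub_comm (1/4*c*(1/6) + 1/4*a*(1/6)) (1/4*d*(1/6) + 1/4*b*(1/6)),
      abs_sub_comm (1/4*c*(1/6) + 1/4*b*(1/6)) (1/4*d*(1/6) + 1/4*a*(1/6))]
  rcases abs_cases (1/4*d*(1/6) + 1/4*c*(1/6) - (1/4*b*(1/6) + 1/4*a*(1/6))) with ⟨h1,_⟩|⟨h1,_⟩ <;>
  rcases abs_cases (1/4*d*(1/6) + 1/4*b*(1/6) - (1/4*c*(1/6) + 1/4*a*(1/6))) with ⟨h3,_⟩|⟨h3,_⟩ <;>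
  rcases abs_cases (1/4*d*(1/6) + 1/4*a*(1/6) - (1/4*c*(1/6) + 1/4*b*(1/6))) with ⟨h6,_⟩|⟨h6,_⟩ <;>
  linarith

/-- **First part of Lemma `lem:compex`** (classical bound): let `X` be uniform on
`{0,1}²` and `F` a uniform balanced random predicate on `{0,1}²` independent of `X`.
For every channel `P_{S|X}` from `{0,1}²` to `{0,1}` (given as `C`, with `S` the channel
output), `d(F(X)|S F) ≤ 1/4`, where `d(F(X)|S F)` is the expected distance of `F(X)`
from uniform given `(S, F)`, computed from the joint distribution
`P((s,f), b) = ∑_{x : f(x)=b} (1/4)·C(s|x)·P_F(f)`. -/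
theorem lemma_compex_classical (C : (Bool × Bool) → Bool → ℝ)
    (hC0 : ∀ x s, 0 ≤ C x s) (hC1 : ∀ x, ∑ s, C x s = 1) :
    dCond (fun (p : Bool × ((Bool × Bool) → Bool)) (b : Bool) =>
        ∑ x ∈ univ.filter (fun x => p.2 x = b), (1 / 4 : ℝ) * C x p.1 * PF p.2)
      ≤ 1 / 4 := by
  rw [dCond]
  have hPF0 : ∀ f, 0 ≤ PF f := by
    intro f; rw [PF]; split <;> positivity
  have step : ∀ p : Bool × ((Bool × Bool) → Bool),
      (∑ z, ∑ x ∈ univ.filter (fun x => p.2 x = z), (1 / 4 : ℝ) * C x p.1 * PF p.2) *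
        distUnif (fun z => (∑ x ∈ univ.filter (fun x => p.2 x = z), (1 / 4 : ℝ) * C x p.1 * PF p.2)
          / ∑ z', ∑ x ∈ univ.filter (fun x => p.2 x = z'), (1 / 4 : ℝ) * C x p.1 * PF p.2)
      = |(∑ x ∈ univ.filter (fun x => p.2 x = true), (1 / 4 : ℝ) * C x p.1 * PF p.2)
          - ∑ x ∈ univ.filter (fun x => p.2 x = false), (1 / 4 : ℝ) * C x p.1 * PF p.2| / 2 := by
    intro p
    exact key (fun z => ∑ x ∈ univ.filter (fun x => p.2 x = z), (1 / 4 : ℝ) * C x p.1 * PF p.2)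
      (Finset.sum_nonneg fun x _ => mul_nonneg (mul_nonneg (by norm_num) (hC0 x _)) (hPF0 _))
      (Finset.sum_nonneg fun x _ => mul_nonneg (mul_nonneg (by norm_num) (hC0 x _)) (hPF0 _))
  rw [Finset.sum_congr rfl (fun p _ => step p)]
  rw [Fintype.sum_prod_type]
  have hrestrict : ∀ s : Bool,
      (∑ f : (Bool × Bool) → Bool,
        |(∑ x ∈ univ.filter (fun x => f x = true), (1 / 4 : ℝ) * C x s * PF f)
          - ∑ x ∈ univ.filter (fun x => f x = false), (1 / 4 : ℝ) * C x s * PF f| / 2)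
      = ∑ f ∈ Bal,
        |(∑ x ∈ univ.filter (fun x => f x = true), (1 / 4 : ℝ) * C x s * PF f)
          - ∑ x ∈ univ.filter (fun x => f x = false), (1 / 4 : ℝ) * C x s * PF f| / 2 := by
    intro s
    refine (Finset.sum_subset (Finset.subset_univ Bal) ?_).symm
    intro f _ hf
    have : PF f = 0 := by rw [PF, if_neg hf]
    simp [this]
  simp only [hrestrict]
  have hBal : Bal = {fun x => x.1, fun x => !x.1, fun x => x.2, fun x => !x.2,
      fun x => xor x.1 x.2, fun x => !(xor x.1 x.2)} := by decide
  have hPF6 : ∀ f ∈ Bal, PF f = 6⁻¹ := by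
    intro f hf
    rw [PF, if_pos hf, show Bal.card = 6 from by decide]
    norm_num
  rw [hBal]
  rw [Fintype.sum_bool]
  repeat rw [Finset.sum_insert (by decide)]
  simp only [Finset.sum_singleton]
  simp only [hPF6 _ (by decide : (fun (x : Bool × Bool) => x.1) ∈ Bal),
    hPF6 _ (by decide : (fun (x : Bool × Bool) => !x.1) ∈ Bal),
    hPF6 _ (by decide : (fun (x : Bool × Bool) => x.2) ∈ Bal),
    hPF6 _ (by decide : (fun (x : Bool × Bool) => !x.2) ∈ Bal),
    hPF6 _ (by decide : (fun (x : Bool × Bool) => xor x.1 x.2) ∈ Bal),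
    hPF6 _ (by decide : (fun (x : Bool × Bool) => !(xor x.1 x.2)) ∈ Bal)]
  simp only [Finset.sum_filter, Fintype.sum_prod_type, Fintype.sum_bool]
  norm_num
  have hub : ∀ x s, C x s ≤ 1 := by
    intro x s
    have h := hC1 x
    rw [Fintype.sum_bool] at h
    cases s <;> [linarith [hC0 x true]; linarith [hC0 x false]]
  have H1 := six (C (false,false) true) (C (false,true) true) (C (true,false) true) (C (true,true) true)
    (hC0 _ _) (hub _ _) (hC0 _ _) (hub _ _) (hC0 _ _) (hub _ _) (hC0 _ _) (hub _ _)
  have H2 := six (C (false,false) false) (C (false,true) false) (C (true,false) false) (C (true,true) false)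
    (hC0 _ _) (hub _ _) (hC0 _ _) (hub _ _) (hC0 _ _) (hub _ _) (hC0 _ _) (hub _ _)
  linarith
end

section
/- Let n and s be natural numbers with s < n, let X be uniformly distributed on {0,1}^n, and let F be a uniform random predicate on {0,1}^n (uniformly distributed over all 2^{2^n} functions {0,1}^n → {0,1}), independent of X. Then there exists a channel P_{S|X} from {0,1}^n to {0,1}^s (in fact a deterministic function S = σ(X) whose fibers all have size 2^{n−s}) such that d(F(X)|S F) ≥ (1/2)·C(2^{n−s}), where C(m) := binom(m, m/2)·2^{−m} and d(F(X)|S F) := Σ_{s',f} P_S(s')·P_F(f)·d(P_{F(X)|S=s',F=f}). -/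
open Finset

/-- `C(m) = binom(m, m/2) · 2^{-m}`. -/
noncomputable def Cfun (m : ℕ) : ℝ := (m.choose (m / 2) : ℝ) / (2 : ℝ) ^ m

/-! Take for `σ` any map all of whose fibers have size `m = 2^(n-s)`. Given `S = t` and `F = f`,
the bit `F(X)` is `1` with probability `k/m`, where `k` is the number of ones of `f` on the fiber
of `t`, so its distance from uniform is `|2k - m| / (2m)`. Restricted to a fiber, `f` is a uniform
word of length `m`, so `k` is binomially distributed and the average distance is
`∑_j C(m,j) |2j - m| / (2^(m+1) m)`. The mean absolute deviation `∑_j C(m,j) |2j - m| = m C(m, m/2)`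
follows from the telescoping identity `C(m,j) (m - 2j) = m (C(m-1,j) - C(m-1,j-1))`, so the bound
holds with equality. -/

theorem sum_range_choose_mul_sub (n r : ℕ) :
    ∑ j ∈ range (r + 1), ((n + 1).choose j : ℝ) * (n + 1 - 2 * j) =
      (n + 1) * n.choose r := by
  induction r with
  | zero => simp
  | succ r ih =>
    have hmul : ((n + 1 : ℕ) : ℝ) * n.choose r = (n + 1).choose (r + 1) * (r + 1 : ℕ) := by
      exact_mod_cast Nat.add_one_mul_choose_eq n r
    have hpascal : ((n + 1).choose (r + 1) : ℝ) = n.choose r + n.choose (r + 1) := by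
      exact_mod_cast Nat.choose_succ_succ' n r
    push_cast at hmul
    rw [sum_range_succ, ih]
    push_cast
    linear_combination 2 * hmul + (n + 1 : ℝ) * hpascal

theorem sum_range_choose_mul_abs_sub (h : ℕ) :
    ∑ j ∈ range (2 * h + 1), ((2 * h).choose j : ℝ) * |2 * (j : ℝ) - 2 * h| =
      2 * h * (2 * h).choose h := by
  rcases h with _ | k
  · simp
  set T : ℕ → ℝ := fun r =>
    ∑ j ∈ range (r + 1), ((2 * (k + 1)).choose j : ℝ) * (2 * (k + 1) - 2 * j) with hT
  have hT_eq : ∀ r, T r = 2 * (k + 1) * (2 * k + 1).choose r := by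
    intro r
    simp only [hT]
    rw [show 2 * (k + 1) = (2 * k + 1) + 1 by ring]
    convert sum_range_choose_mul_sub (2 * k + 1) r using 2 <;> push_cast <;> ring
  have hlow : ∑ j ∈ range (k + 1 + 1),
      ((2 * (k + 1)).choose j : ℝ) * |2 * (j : ℝ) - 2 * (k + 1 : ℕ)| = T (k + 1) := by
    refine sum_congr rfl fun j hj => ?_
    have : (j : ℝ) ≤ k + 1 := by exact_mod_cast Nat.lt_succ_iff.mp (mem_range.mp hj)
    rw [abs_of_nonpos (by push_cast; linarith)]
    push_cast; ring
  have hhigh : ∑ j ∈ Ico (k + 1 + 1) (2 * (k + 1) + 1),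
      ((2 * (k + 1)).choose j : ℝ) * |2 * (j : ℝ) - 2 * (k + 1 : ℕ)| =
        T (k + 1) - T (2 * (k + 1)) := by
    rw [← neg_sub, hT]
    simp only
    rw [← sum_Ico_eq_sub _ (by omega), ← sum_neg_distrib]
    refine sum_congr rfl fun j hj => ?_
    have : (k + 1 + 1 : ℝ) ≤ j := by exact_mod_cast (mem_Ico.mp hj).1
    rw [abs_of_nonneg (by push_cast; linarith)]
    push_cast; ring
  have hcentral : ((2 * (k + 1)).choose (k + 1) : ℝ) = 2 * (2 * k + 1).choose (k + 1) := by
    rw [show 2 * (k + 1) = (2 * k + 1) + 1 by ring, Nat.choose_succ_succ', ← Nat.choose_symm_half]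
    push_cast; ring
  rw [← sum_range_add_sum_Ico _ (by omega : k + 1 + 1 ≤ 2 * (k + 1) + 1), hlow, hhigh, hT_eq,
    hT_eq, Nat.choose_eq_zero_of_lt (by omega : 2 * k + 1 < 2 * (k + 1)), hcentral]
  push_cast
  ring

theorem sum_fun_bool_card_filter {β M : Type*} [Fintype β] [DecidableEq β] [AddCommMonoid M]
    (g : ℕ → M) :
    ∑ f : β → Bool, g #{b | f b = true} =
      ∑ j ∈ range (Fintype.card β + 1), (Fintype.card β).choose j • g j := by
  let e : (β → Bool) ≃ Finset β :=
    { toFun f := {b | f b = true}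
      invFun S b := decide (b ∈ S)
      left_inv f := by ext b; simp
      right_inv S := by ext b; simp }
  rw [← card_univ, ← sum_powerset_apply_card, powerset_univ]
  exact Fintype.sum_equiv e _ _ fun f => rfl

theorem sum_fun_bool_card_filter_and {α M : Type*} [Fintype α] [DecidableEq α] [AddCommMonoid M]
    (p : α → Prop) [DecidablePred p] (g : ℕ → M) :
    ∑ f : α → Bool, g #{x | p x ∧ f x = true} =
      2 ^ (Fintype.card α - #{x | p x}) •
        ∑ j ∈ range (#{x | p x} + 1), (#{x | p x}).choose j • g j := by
  have hcard : ∀ f : α → Bool,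
      #{x | p x ∧ f x = true} = #{a : {x // p x} | f a = true} := by
    intro f
    rw [← Fintype.card_subtype, ← Fintype.card_subtype]
    exact (Fintype.card_congr (Equiv.subtypeSubtypeEquivSubtypeInter p (f · = true))).symm
  simp_rw [hcard]
  rw [Fintype.sum_equiv (Equiv.piEquivPiSubtypeProd p fun _ => Bool)
      (fun f => g #{a : {x // p x} | f a = true}) (fun q => g #{a | q.1 a = true}) fun _ => rfl]
  simp only [Fintype.sum_prod_type_right, sum_const, card_univ]
  rw [Fintype.card_fun, Fintype.card_bool, Fintype.card_subtype_compl, sum_fun_bool_card_filter,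
    Fintype.card_subtype]

theorem mul_distUnif_bool (w : Bool → ℝ) (hw : ∀ b, 0 ≤ w b) :
    (∑ b, w b) * distUnif (fun b => w b / ∑ b', w b') = |w true - w false| / 2 := by
  simp only [distUnif, Fintype.sum_bool, Fintype.card_bool, Nat.cast_ofNat]
  rcases (add_nonneg (hw true) (hw false)).eq_or_lt with h0 | hpos
  · have ht : w true = 0 := by linarith [hw true, hw false]
    have hf : w false = 0 := by linarith [hw true, hw false]
    simp [ht, hf]
  · set W := w true + w false
    have h2W : |2 * W| = 2 * W := abs_of_pos (by linarith)
    have htrue : |w true / W - 1 / 2| = |w true - w false| / (2 * W) := by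
      rw [show w true / W - 1 / 2 = (w true - w false) / (2 * W) by field_simp; ring, abs_div, h2W]
    have hfalse : |w false / W - 1 / 2| = |w true - w false| / (2 * W) := by
      rw [show w false / W - 1 / 2 = -((w true - w false) / (2 * W)) by field_simp; ring, abs_neg,
        abs_div, h2W]
    rw [htrue, hfalse]
    field_simp
    ring

theorem card_filter_and_true_add_card_filter_and_false {α : Type*} [Fintype α] (p : α → Prop)
    [DecidablePred p] (f : α → Bool) :
    #{x | p x ∧ f x = true} + #{x | p x ∧ f x = false} = #{x | p x} := by
  rw [← filter_filter, ← filter_filter,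
    ← card_filter_add_card_filter_not (s := univ.filter p) (fun x => f x = true)]
  simp only [Bool.not_eq_true]

theorem sum_fun_bool_abs_card_sub {α : Type*} [Fintype α] [DecidableEq α] (p : α → Prop)
    [DecidablePred p] (h : ℕ) (hp : #{x | p x} = 2 * h) :
    ∑ f : α → Bool, |(#{x | p x ∧ f x = true} : ℝ) - #{x | p x ∧ f x = false}| =
      2 ^ (Fintype.card α - 2 * h) * (2 * h * (2 * h).choose h) := by
  have hfalse : ∀ f : α → Bool,
      (#{x | p x ∧ f x = false} : ℝ) = 2 * h - #{x | p x ∧ f x = true} := by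
    intro f
    rw [eq_sub_iff_add_eq', ← Nat.cast_add, card_filter_and_true_add_card_filter_and_false, hp]
    push_cast; ring
  simp_rw [hfalse, show ∀ k : ℝ, k - (2 * h - k) = 2 * k - 2 * h from fun k => by ring]
  rw [sum_fun_bool_card_filter_and p fun j => |2 * (j : ℝ) - 2 * h|, hp]
  simp only [nsmul_eq_mul]
  rw [sum_range_choose_mul_abs_sub]
  push_cast; ring

theorem dCond_eq_half_Cfun_of_card_fiber {α β : Type*} [Fintype α] [DecidableEq α] [Nonempty α]
    [Fintype β] [DecidableEq β] (σ : α → β) (h : ℕ) (hσ : ∀ t, #{x | σ x = t} = 2 * h) :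
    dCond (fun (p : β × (α → Bool)) (b : Bool) =>
        ∑ _x ∈ univ.filter (fun x => σ x = p.1 ∧ p.2 x = b),
          (1 / (Fintype.card α : ℝ)) * (1 / (Fintype.card (α → Bool) : ℝ))) =
      1 / 2 * Cfun (2 * h) := by
  set c : ℝ := (1 / (Fintype.card α : ℝ)) * (1 / (Fintype.card (α → Bool) : ℝ)) with hc
  have hcard : Fintype.card α = Fintype.card β * (2 * h) := by
    rw [← card_univ, card_eq_sum_card_fiberwise (fun x _ => mem_univ (σ x))]
    simp [hσ]
  obtain ⟨hβ, hh⟩ : 0 < Fintype.card β ∧ 0 < 2 * h :=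
    CanonicallyOrderedAdd.mul_pos.mp (hcard ▸ Fintype.card_pos)
  have hh' : (h : ℝ) ≠ 0 := by exact_mod_cast (by omega : h ≠ 0)
  unfold dCond
  rw [Fintype.sum_congr _ _ fun p =>
    mul_distUnif_bool _ fun b => sum_nonneg fun _ _ => by positivity]
  simp only [sum_const, nsmul_eq_mul, ← sub_mul, abs_mul, Fintype.sum_prod_type,
    abs_of_nonneg (by positivity : 0 ≤ c), mul_div_assoc, ← sum_mul]
  simp only [sum_fun_bool_abs_card_sub (σ · = _) h (hσ _), sum_const, card_univ, nsmul_eq_mul]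
  have hpow : (2 : ℝ) ^ Fintype.card α = 2 ^ (Fintype.card α - 2 * h) * 2 ^ (2 * h) := by
    rw [← pow_add, Nat.sub_add_cancel (by rw [hcard]; exact Nat.le_mul_of_pos_left _ hβ)]
  rw [hc, Cfun, Nat.mul_div_cancel_left h two_pos, Fintype.card_fun, Fintype.card_bool]
  push_cast
  rw [hpow, hcard]
  push_cast
  field_simp

theorem exists_card_filter_eq_of_card_eq_mul {α β : Type*} [Fintype α] [Fintype β]
    [DecidableEq β] (m : ℕ) (hm : Fintype.card α = Fintype.card β * m) :
    ∃ σ : α → β, ∀ t, #{x | σ x = t} = m := by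
  let e : α ≃ β × Fin m := Fintype.equivOfCardEq (by simp [hm])
  refine ⟨fun x => (e x).1, fun t => ?_⟩
  rw [card_equiv e (t := {t} ×ˢ univ) fun x => by
      simp only [mem_filter, mem_univ, true_and, mem_product, mem_singleton, and_true],
    card_product, card_singleton, card_univ, Fintype.card_fin, one_mul]

/-- **Lemma `lem:classical`**: let `s < n`, let `X` be uniform on `{0,1}^n` and let `F`
be a uniform random predicate on `{0,1}^n` (uniform over all `2^(2^n)` functions
`{0,1}^n → {0,1}`), independent of `X`. Then there is a channel from `{0,1}^n` to
`{0,1}^s` — in fact a deterministic function `σ` all of whose fibers have size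
`2^(n-s)` — such that `d(F(X)|S F) ≥ (1/2)·C(2^(n-s))`, where `S = σ(X)` and
`d(F(X)|S F)` is computed from the joint distribution
`P((t,f), b) = ∑_{x : σ(x)=t, f(x)=b} 2^{-n} · P_F(f)` with
`P_F(f) = 1/|{0,1}^{2^n}|` the uniform distribution on predicates. -/
theorem lemma_classical (n s : ℕ) (hs : s < n) :
    ∃ σ : (Fin n → Bool) → (Fin s → Bool),
      (∀ t, (univ.filter (fun x => σ x = t)).card = 2 ^ (n - s)) ∧
      dCond (fun (p : (Fin s → Bool) × ((Fin n → Bool) → Bool)) (b : Bool) =>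
          ∑ x ∈ univ.filter (fun x => σ x = p.1 ∧ p.2 x = b),
            (1 / (Fintype.card (Fin n → Bool) : ℝ)) *
              (1 / (Fintype.card ((Fin n → Bool) → Bool) : ℝ)))
        ≥ (1 / 2) * Cfun (2 ^ (n - s)) := by
  obtain ⟨σ, hσ⟩ := exists_card_filter_eq_of_card_eq_mul (α := Fin n → Bool) (β := Fin s → Bool)
    (2 ^ (n - s)) (by simp [← pow_add, Nat.add_sub_cancel' hs.le])
  refine ⟨σ, hσ, ge_of_eq ?_⟩
  have hm : 2 ^ (n - s) = 2 * 2 ^ (n - s - 1) := by rw [← pow_succ']; congr 1; omega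
  rw [hm] at hσ ⊢
  exact dCond_eq_half_Cfun_of_card_fiber σ _ hσ
end

section
/- (Security of privacy amplification against quantum adversaries) Let X be a random variable with distribution P_X on a finite set 𝒳 satisfying Σ_{x∈𝒳} P_X(x)² ≤ 2^{−n} (i.e., Rényi entropy of order 2 at least n), let k, s be natural numbers, and let G be a two-universal random function from 𝒳 to {0,1}^k, independent of X. Then for every family {ρ_x}_{x∈𝒳} of density matrices on ℂ^{2^s}, d(G(X)|⟨ρ_X,G⟩) ≤ (3/4)·2^{−(n−s−k)/2}. -/
open Finset ComplexOrder

/-!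
For a fixed hash function `g` and measurement `{E_w}`, the distance from uniform of `g(X)` given
`W` is `½ ∑_{w,z} |tr(E_w Δ_z)|`, where `Δ_z` is the adversary's sub-normalised state jointly
with `g(X) = z`, minus its share `ρ_E / |𝒵|` under a uniform key. Summing over the POVM
bounds this by the trace norms `‖Δ_z‖₁ ≤ √(dim ⋅ tr Δ_z²)`, and Cauchy–Schwarz over `z` gives
`½ √(dim ⋅ |𝒵| ⋅ ∑_z tr Δ_z²)`, uniformly in the measurement. Expanding `∑_z tr Δ_z²` yields
`∑_{x,x'} P(x) P(x') (1[g x = g x'] - 1/|𝒵|) tr(ρ_x ρ_x')`; averaged over a two-universal `G`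
only the diagonal survives, and it is at most `∑_x P(x)² ≤ 2^{-n}`. Jensen's inequality for the
square root finishes the proof, even with the constant `1/2` in place of `3/4`.
-/

lemma dCond_eq_of_nonneg {W Z : Type*} [Fintype W] [Fintype Z] {P : W → Z → ℝ}
    (hP : ∀ w z, 0 ≤ P w z) :
    dCond P = 1 / 2 * ∑ w, ∑ z, |P w z - (∑ z', P w z') / Fintype.card Z| := by
  rw [dCond, mul_sum]
  refine sum_congr rfl fun w _ => ?_
  rcases (sum_nonneg fun z _ => hP w z : 0 ≤ ∑ z, P w z).eq_or_lt with hzero | hpos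
  · have hw : ∀ z, P w z = 0 := fun z =>
      (sum_eq_zero_iff_of_nonneg fun z _ => hP w z).mp hzero.symm z (mem_univ z)
    simp [hw]
  · rw [distUnif, mul_left_comm, mul_sum]
    congr 1
    refine sum_congr rfl fun z _ => ?_
    rw [← abs_of_pos hpos, ← abs_mul, abs_of_pos hpos]
    field_simp

lemma sum_centered_indicator_mul {Z : Type*} [Fintype Z] [DecidableEq Z] (a b : Z) :
    ∑ z, ((if a = z then 1 else 0) - (Fintype.card Z : ℝ)⁻¹) *
      ((if b = z then 1 else 0) - (Fintype.card Z : ℝ)⁻¹) =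
      (if a = b then 1 else 0) - (Fintype.card Z : ℝ)⁻¹ := by
  have : Nonempty Z := ⟨a⟩
  have hN : (Fintype.card Z : ℝ) ≠ 0 := by positivity
  simp only [sub_mul, mul_sub, sum_sub_distrib, ite_mul, one_mul, zero_mul, mul_ite, mul_one,
    mul_zero, sum_ite_eq, mem_univ, if_true, sum_const, card_univ, nsmul_eq_mul]
  field_simp
  split_ifs <;> ring

lemma Real.sum_mul_sqrt_le_sqrt_sum_mul {ι : Type*} (s : Finset ι) {p q : ι → ℝ}
    (hp : ∀ i ∈ s, 0 ≤ p i) (hp1 : ∑ i ∈ s, p i = 1) (hq : ∀ i ∈ s, 0 ≤ q i) :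
    ∑ i ∈ s, p i * √(q i) ≤ √(∑ i ∈ s, p i * q i) :=
  Real.strictConcaveOn_sqrt.concaveOn.le_map_sum hp hp1 hq

lemma Real.sum_sqrt_le_sqrt_card_mul_sum {ι : Type*} [Fintype ι] {a : ι → ℝ} (ha : ∀ i, 0 ≤ a i) :
    ∑ i, √(a i) ≤ √(Fintype.card ι * ∑ i, a i) := by
  have := Real.sum_sqrt_mul_sqrt_le univ (fun _ => zero_le_one) ha
  simp only [Real.sqrt_one, one_mul, sum_const, card_univ, nsmul_eq_mul, mul_one] at this
  rwa [Real.sqrt_mul (Nat.cast_nonneg _)]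

namespace Matrix.IsHermitian

variable {n : Type*} [Fintype n] [DecidableEq n] {A : Matrix n n ℂ}

lemma re_trace_mul_eq_sum_mul_eigenvalues (hA : A.IsHermitian) (B : Matrix n n ℂ) :
    (B * A).trace.re = ∑ i,
      ((star (hA.eigenvectorUnitary : Matrix n n ℂ) * B * hA.eigenvectorUnitary) i i).re *
        hA.eigenvalues i := by
  set U : Matrix n n ℂ := (hA.eigenvectorUnitary : Matrix n n ℂ)
  have hBA : B * A = B * U * diagonal (RCLike.ofReal ∘ hA.eigenvalues) * star U := by
    conv_lhs => rw [hA.spectral_theorem, Unitary.conjStarAlgAut_apply]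
    simp only [Matrix.mul_assoc]; rfl
  rw [hBA, trace_mul_comm, ← Matrix.mul_assoc, ← Matrix.mul_assoc, trace, Complex.re_sum]
  simp [mul_diagonal]

lemma re_trace_mul_self (hA : A.IsHermitian) :
    (A * A).trace.re = ∑ i, hA.eigenvalues i ^ 2 := by
  have hD := hA.conjStarAlgAut_star_eigenvectorUnitary
  rw [Unitary.conjStarAlgAut_star_apply] at hD
  rw [hA.re_trace_mul_eq_sum_mul_eigenvalues, hD]
  simp [sq]

-- In the eigenbasis of `A` the diagonals of the `E w` form a stochastic matrix.
lemma sum_abs_re_trace_mul_le_sum_abs_eigenvalues {ι : Type*} [Fintype ι] (hA : A.IsHermitian)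
    {E : ι → Matrix n n ℂ} (hE : ∀ w, (E w).PosSemidef) (hE1 : ∑ w, E w = 1) :
    ∑ w, |(E w * A).trace.re| ≤ ∑ i, |hA.eigenvalues i| := by
  set U : Matrix n n ℂ := (hA.eigenvectorUnitary : Matrix n n ℂ)
  set f : ι → n → ℝ := fun w i => ((star U * E w * U) i i).re
  have hf0 : ∀ w i, 0 ≤ f w i := fun w i =>
    (Complex.nonneg_iff.mp ((hE w).conjTranspose_mul_mul_same U).diag_nonneg).1
  have hf1 : ∀ i, ∑ w, f w i = 1 := by
    have hU : ∑ w, star U * E w * U = 1 := by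
      rw [← Finset.sum_mul, ← Finset.mul_sum, hE1, Matrix.mul_one, Unitary.coe_star_mul_self]
    intro i
    simp only [f, ← Complex.re_sum, ← Matrix.sum_apply, hU, one_apply_eq, Complex.one_re]
  calc ∑ w, |(E w * A).trace.re| = ∑ w, |∑ i, f w i * hA.eigenvalues i| := by
        simp only [hA.re_trace_mul_eq_sum_mul_eigenvalues, f, U]
    _ ≤ ∑ w, ∑ i, f w i * |hA.eigenvalues i| := by
        gcongr with w
        refine (abs_sum_le_sum_abs _ _).trans_eq ?_
        simp only [abs_mul, abs_of_nonneg (hf0 w _)]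
    _ = ∑ i, |hA.eigenvalues i| := by
        simp only [sum_comm (γ := ι), ← sum_mul, hf1, one_mul]

lemma sum_abs_eigenvalues_le_sqrt (hA : A.IsHermitian) :
    ∑ i, |hA.eigenvalues i| ≤ √(Fintype.card n * (A * A).trace.re) := by
  have := Real.sum_mul_le_sqrt_mul_sqrt univ (fun _ => (1 : ℝ)) (fun i => |hA.eigenvalues i|)
  simp only [one_mul, one_pow, sum_const, card_univ, sq_abs, nsmul_eq_mul, mul_one] at this
  rwa [hA.re_trace_mul_self, Real.sqrt_mul (Nat.cast_nonneg _)]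

lemma re_trace_mul_self_nonneg (hA : A.IsHermitian) : 0 ≤ (A * A).trace.re := by
  rw [hA.re_trace_mul_self]
  positivity

end Matrix.IsHermitian

namespace Matrix.PosSemidef

variable {n : Type*} [Fintype n] {A B : Matrix n n ℂ}

lemma re_trace_mul_nonneg_s15 (hA : A.PosSemidef) (hB : B.PosSemidef) : 0 ≤ (A * B).trace.re := by
  classical
  rw [hB.isHermitian.re_trace_mul_eq_sum_mul_eigenvalues]
  exact sum_nonneg fun i _ =>
    mul_nonneg (Complex.nonneg_iff.mp (hA.conjTranspose_mul_mul_same _).diag_nonneg).1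
      (hB.eigenvalues_nonneg i)

lemma re_trace_mul_self_le_one (hA : A.PosSemidef) (h1 : A.trace = 1) :
    (A * A).trace.re ≤ 1 := by
  classical
  have hsum : ∑ i, hA.isHermitian.eigenvalues i = 1 := by
    simpa [h1, Complex.re_sum] using
      (congrArg Complex.re hA.isHermitian.trace_eq_sum_eigenvalues).symm
  rw [hA.isHermitian.re_trace_mul_self, ← one_pow 2, ← hsum]
  exact sum_sq_le_sq_sum_of_nonneg fun i _ => hA.eigenvalues_nonneg i

end Matrix.PosSemidef

section Deviation

variable {n 𝒳 𝒵 : Type*} [Fintype 𝒳] [Fintype 𝒵] [DecidableEq 𝒵]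

lemma re_trace_mul_sum_ofReal_smul [Fintype n] (B : Matrix n n ℂ) (a : 𝒳 → ℝ)
    (ρ : 𝒳 → Matrix n n ℂ) :
    (B * ∑ x, (a x : ℂ) • ρ x).trace.re = ∑ x, a x * (B * ρ x).trace.re := by
  simp [Matrix.mul_sum, Matrix.trace_sum, Complex.re_sum]

lemma re_trace_sum_ofReal_smul_mul_sum [Fintype n] (a b : 𝒳 → ℝ) (ρ : 𝒳 → Matrix n n ℂ) :
    ((∑ x, (a x : ℂ) • ρ x) * ∑ x', (b x' : ℂ) • ρ x').trace.re =
      ∑ x, ∑ x', a x * b x' * (ρ x * ρ x').trace.re := by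
  rw [Matrix.sum_mul, Matrix.trace_sum, Complex.re_sum]
  refine sum_congr rfl fun x _ => ?_
  rw [Matrix.smul_mul, Matrix.trace_smul, smul_eq_mul, Complex.re_ofReal_mul,
    re_trace_mul_sum_ofReal_smul, mul_sum]
  exact sum_congr rfl fun x' _ => by ring

/-- The adversary's sub-normalised state on the event `g X = z`, minus its share `ρ_E / |𝒵|`
under a uniform key. -/
noncomputable def deviation (PX : 𝒳 → ℝ) (ρ : 𝒳 → Matrix n n ℂ) (g : 𝒳 → 𝒵) (z : 𝒵) :
    Matrix n n ℂ :=
  ∑ x, ((PX x * ((if g x = z then 1 else 0) - (Fintype.card 𝒵 : ℝ)⁻¹) : ℝ) : ℂ) • ρ x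

noncomputable def collisionExcess [Fintype n] (PX : 𝒳 → ℝ) (ρ : 𝒳 → Matrix n n ℂ)
    (g : 𝒳 → 𝒵) : ℝ :=
  ∑ x, ∑ x', PX x * PX x' * ((if g x = g x' then 1 else 0) - (Fintype.card 𝒵 : ℝ)⁻¹) *
    (ρ x * ρ x').trace.re

variable (PX : 𝒳 → ℝ) {ρ : 𝒳 → Matrix n n ℂ} (g : 𝒳 → 𝒵)

lemma isHermitian_deviation (hρ : ∀ x, (ρ x).IsHermitian) (z : 𝒵) :
    (deviation PX ρ g z).IsHermitian :=
  isSelfAdjoint_sum univ fun x _ => IsSelfAdjoint.smul (Complex.conj_ofReal _) (hρ x)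

variable [Fintype n]

lemma re_trace_mul_deviation (B : Matrix n n ℂ) (z : 𝒵) :
    (B * deviation PX ρ g z).trace.re =
      ∑ x ∈ univ.filter (fun x => g x = z), PX x * (B * ρ x).trace.re -
        (∑ z', ∑ x ∈ univ.filter (fun x => g x = z'), PX x * (B * ρ x).trace.re) /
          Fintype.card 𝒵 := by
  rw [deviation, re_trace_mul_sum_ofReal_smul, sum_fiberwise, sum_filter, div_eq_mul_inv,
    sum_mul, ← sum_sub_distrib]
  refine sum_congr rfl fun x _ => ?_
  split_ifs <;> ring

lemma sum_re_trace_deviation_mul_self :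
    ∑ z, (deviation PX ρ g z * deviation PX ρ g z).trace.re = collisionExcess PX ρ g := by
  simp only [deviation, re_trace_sum_ofReal_smul_mul_sum, collisionExcess]
  rw [sum_comm]
  refine sum_congr rfl fun x _ => ?_
  rw [sum_comm]
  refine sum_congr rfl fun x' _ => ?_
  rw [← sum_centered_indicator_mul, mul_sum, sum_mul]
  exact sum_congr rfl fun z _ => by ring

lemma collisionExcess_nonneg [DecidableEq n] (hρ : ∀ x, (ρ x).IsHermitian) :
    0 ≤ collisionExcess PX ρ g := by
  rw [← sum_re_trace_deviation_mul_self]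
  exact sum_nonneg fun z _ => (isHermitian_deviation PX g hρ z).re_trace_mul_self_nonneg

end Deviation

lemma dQuant_le_sqrt_collisionExcess {d : ℕ} {𝒳 𝒵 : Type} [Fintype 𝒳] [Fintype 𝒵]
    [DecidableEq 𝒵] {PX : 𝒳 → ℝ} (hPX0 : ∀ x, 0 ≤ PX x) {ρ : 𝒳 → Matrix (Fin d) (Fin d) ℂ}
    (hρ : ∀ x, (ρ x).PosSemidef) (g : 𝒳 → 𝒵) :
    dQuant PX ρ g ≤ 1 / 2 * √(d * Fintype.card 𝒵 * collisionExcess PX ρ g) := by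
  refine Real.sSup_le ?_ (by positivity)
  rintro r ⟨M, rfl⟩
  have hΔ := isHermitian_deviation PX g fun x => (hρ x).isHermitian
  have hP : ∀ w z, 0 ≤ ∑ x ∈ univ.filter (fun x => g x = z), PX x * (M.E w * ρ x).trace.re :=
    fun w z => sum_nonneg fun x _ => mul_nonneg (hPX0 x) ((M.psd w).re_trace_mul_nonneg_s15 (hρ x))
  rw [dCond_eq_of_nonneg hP]
  simp only [← re_trace_mul_deviation]
  rw [sum_comm]
  gcongr
  calc ∑ z, ∑ w, |(M.E w * deviation PX ρ g z).trace.re|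
      ≤ ∑ z, √(d * (deviation PX ρ g z * deviation PX ρ g z).trace.re) := by
        gcongr with z
        simpa using ((hΔ z).sum_abs_re_trace_mul_le_sum_abs_eigenvalues M.psd M.sum_eq).trans
          (hΔ z).sum_abs_eigenvalues_le_sqrt
    _ ≤ √(Fintype.card 𝒵 * ∑ z, d * (deviation PX ρ g z * deviation PX ρ g z).trace.re) :=
        Real.sum_sqrt_le_sqrt_card_mul_sum fun z =>
          mul_nonneg (Nat.cast_nonneg _) (hΔ z).re_trace_mul_self_nonneg
    _ = √(d * Fintype.card 𝒵 * collisionExcess PX ρ g) := by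
        rw [← mul_sum, sum_re_trace_deviation_mul_self, mul_left_comm, mul_assoc]

lemma sum_mul_collisionExcess_le {n 𝒳 𝒵 : Type*} [Fintype n] [Fintype 𝒳] [DecidableEq 𝒳]
    [Fintype 𝒵] [DecidableEq 𝒵] {PX : 𝒳 → ℝ} (hPX0 : ∀ x, 0 ≤ PX x) {ρ : 𝒳 → Matrix n n ℂ}
    (hρ : ∀ x, (ρ x).PosSemidef) (hρ1 : ∀ x, (ρ x).trace = 1)
    {PG : (𝒳 → 𝒵) → ℝ} (hPG1 : ∑ g, PG g = 1)
    (hG : ∀ x x', x ≠ x' →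
      ∑ g ∈ univ.filter (fun g => g x = g x'), PG g ≤ 1 / Fintype.card 𝒵) :
    ∑ g, PG g * collisionExcess PX ρ g ≤ ∑ x, PX x ^ 2 := by
  set c := (Fintype.card 𝒵 : ℝ)⁻¹
  have hc : 0 ≤ c := by positivity
  set pcoll : 𝒳 → 𝒳 → ℝ := fun x x' => ∑ g ∈ univ.filter (fun g => g x = g x'), PG g
  have hexpect : ∀ x x', ∑ g, PG g * (PX x * PX x' * ((if g x = g x' then 1 else 0) - c) *
      (ρ x * ρ x').trace.re) = PX x * PX x' * (pcoll x x' - c) * (ρ x * ρ x').trace.re := by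
    intro x x'
    have hpc : pcoll x x' - c = ∑ g, PG g * ((if g x = g x' then 1 else 0) - c) := by
      simp only [pcoll, sum_filter, mul_sub, sum_sub_distrib, ← sum_mul, hPG1, one_mul, mul_ite,
        mul_one, mul_zero]
    rw [hpc, mul_sum, sum_mul]
    exact sum_congr rfl fun g _ => by ring
  have hterm : ∀ x x', PX x * PX x' * (pcoll x x' - c) * (ρ x * ρ x').trace.re ≤
      if x = x' then PX x ^ 2 else 0 := by
    intro x x'
    have ht0 := (hρ x).re_trace_mul_nonneg_s15 (hρ x')
    split_ifs with hxx
    · subst hxx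
      have hcoll : pcoll x x = 1 := by simp [pcoll, hPG1]
      have ht1 := (hρ x).re_trace_mul_self_le_one (hρ1 x)
      rw [hcoll]
      nlinarith [sq_nonneg (PX x), mul_nonneg (sq_nonneg (PX x)) hc,
        mul_nonneg (mul_nonneg (sq_nonneg (PX x)) hc) ht0]
    · have hle : pcoll x x' - c ≤ 0 := by linarith [one_div (Fintype.card 𝒵 : ℝ) ▸ hG x x' hxx]
      exact mul_nonpos_of_nonpos_of_nonneg
        (mul_nonpos_of_nonneg_of_nonpos (mul_nonneg (hPX0 x) (hPX0 x')) hle) ht0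
  calc ∑ g, PG g * collisionExcess PX ρ g
      = ∑ x, ∑ x', PX x * PX x' * (pcoll x x' - c) * (ρ x * ρ x').trace.re := by
        simp only [collisionExcess, mul_sum, ← hexpect]
        rw [sum_comm]
        exact sum_congr rfl fun x _ => sum_comm
    _ ≤ ∑ x, ∑ x', if x = x' then PX x ^ 2 else 0 := by gcongr with x _ x' _; exact hterm x x'
    _ = ∑ x, PX x ^ 2 := by simp

theorem cor_pa_general {𝒳 : Type} [Fintype 𝒳] [DecidableEq 𝒳] (n : ℝ) (k s : ℕ)
    (PX : 𝒳 → ℝ) (hPX0 : ∀ x, 0 ≤ PX x)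
    (hRenyi : ∑ x, PX x ^ 2 ≤ (2 : ℝ) ^ (-n))
    (PG : (𝒳 → (Fin k → Bool)) → ℝ) (hPG0 : ∀ g, 0 ≤ PG g) (hPG1 : ∑ g, PG g = 1)
    (hGuniv : ∀ x x' : 𝒳, x ≠ x' →
      ∑ g ∈ univ.filter (fun g => g x = g x'), PG g
        ≤ 1 / (Fintype.card (Fin k → Bool) : ℝ))
    (ρ : 𝒳 → Matrix (Fin (2 ^ s)) (Fin (2 ^ s)) ℂ)
    (hρ : ∀ x, (ρ x).PosSemidef) (hρt : ∀ x, (ρ x).trace = 1) :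
    ∑ g, PG g * dQuant PX ρ g ≤ (3 / 4) * (2 : ℝ) ^ (-(n - s - k) / 2) := by
  have hD0 : (0 : ℝ) ≤ (2 ^ s : ℕ) * Fintype.card (Fin k → Bool) := by positivity
  set D : ℝ := (2 ^ s : ℕ) * Fintype.card (Fin k → Bool)
  have hD : D * 2 ^ (-n) = (2 : ℝ) ^ (-(n - s - k)) := by
    simp only [D, Fintype.card_fun, Fintype.card_bool, Fintype.card_fin, Nat.cast_pow,
      Nat.cast_ofNat, ← Real.rpow_natCast, ← Real.rpow_add two_pos]
    ring_nf
  have hC := fun g : 𝒳 → Fin k → Bool => collisionExcess_nonneg PX g fun x => (hρ x).isHermitian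
  calc ∑ g, PG g * dQuant PX ρ g
      ≤ ∑ g, PG g * (1 / 2 * √(D * collisionExcess PX ρ g)) := by
        gcongr with g
        exacts [hPG0 g, dQuant_le_sqrt_collisionExcess hPX0 hρ g]
    _ ≤ 1 / 2 * √(∑ g, PG g * (D * collisionExcess PX ρ g)) := by
        simp only [mul_left_comm (PG _) (1 / 2 : ℝ), ← mul_sum]
        gcongr
        exact Real.sum_mul_sqrt_le_sqrt_sum_mul _ (fun g _ => hPG0 g) hPG1
          fun g _ => mul_nonneg hD0 (hC g)
    _ ≤ 1 / 2 * √(D * 2 ^ (-n)) := by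
        simp only [mul_left_comm (PG _) D, ← mul_sum]
        gcongr
        exact (sum_mul_collisionExcess_le hPX0 hρ hρt hPG1 hGuniv).trans hRenyi
    _ = 1 / 2 * (2 : ℝ) ^ (-(n - s - k) / 2) := by
        rw [hD, Real.sqrt_eq_rpow, ← Real.rpow_mul zero_le_two, div_eq_mul_one_div (-(n - s - k))]
    _ ≤ 3 / 4 * (2 : ℝ) ^ (-(n - s - k) / 2) := by gcongr ?_ * _; norm_num

/-- **Corollary `cor:pa` (security of privacy amplification against quantum
adversaries)**: let `X` be a random variable with distribution `PX` on a finite set `𝒳`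
with Rényi entropy of order 2 at least `n` (i.e. `∑_x P_X(x)² ≤ 2^{-n}`), and let `G` be
a two-universal random function from `𝒳` to `{0,1}^k`, independent of `X`. Then for
every family `{ρ_x}` of density matrices on `ℂ^{2^s}`,
`d(G(X)|⟨ρ_X,G⟩) ≤ (3/4)·2^{-(n-s-k)/2}`. -/
theorem cor_pa {𝒳 : Type} [Fintype 𝒳] [DecidableEq 𝒳] (n : ℝ) (k s : ℕ)
    (PX : 𝒳 → ℝ) (hPX0 : ∀ x, 0 ≤ PX x) (hPX1 : ∑ x, PX x = 1)
    (hRenyi : ∑ x, PX x ^ 2 ≤ (2 : ℝ) ^ (-n))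
    (PG : (𝒳 → (Fin k → Bool)) → ℝ) (hPG0 : ∀ g, 0 ≤ PG g) (hPG1 : ∑ g, PG g = 1)
    (hGuniv : ∀ x x' : 𝒳, x ≠ x' →
      ∑ g ∈ univ.filter (fun g => g x = g x'), PG g
        ≤ 1 / (Fintype.card (Fin k → Bool) : ℝ))
    (ρ : 𝒳 → Matrix (Fin (2 ^ s)) (Fin (2 ^ s)) ℂ)
    (hρ : ∀ x, (ρ x).PosSemidef) (hρt : ∀ x, (ρ x).trace = 1) :
    ∑ g, PG g * dQuant PX ρ g ≤ (3 / 4) * (2 : ℝ) ^ (-(n - s - k) / 2) :=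
  cor_pa_general n k s PX hPX0 hRenyi PG hPG0 hPG1 hGuniv ρ hρ hρt
end

section
/- For every natural number a ≥ 1, Σ_{z=0}^{2a} binom(2a, z)·|1/2 − z/(2a)| = (1/2)·binom(2a, a). -/
/-!
Since `(z + 1) * binom(n, z + 1) = (n - z) * binom(n, z)`, the weights `(n - 2z) * binom(n, z)`
telescope: their partial sums are `m * binom(n, m)`. For `n = 2a` the sign of `n - 2z` changes at
`z = a` and the full sum vanishes, so the sum of `binom(2a, z) * |2a - 2z|` is twice the partial sum
up to `a`, namely `2a * binom(2a, a)`; dividing by `4a` gives the theorem.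
-/

open Finset

namespace Nat

variable {R : Type*} [CommRing R]

theorem sub_two_mul_mul_choose_eq_sub (n z : ℕ) :
    ((n : R) - 2 * z) * n.choose z = (z + 1) * n.choose (z + 1) - z * n.choose z := by
  rcases le_or_gt z n with hz | hz
  · have h := congrArg (Nat.cast (R := R)) (choose_succ_right_eq n z)
    push_cast [hz] at h
    linear_combination -h
  · simp [choose_eq_zero_of_lt hz, choose_eq_zero_of_lt (lt_succ_of_lt hz)]

theorem sum_range_sub_two_mul_mul_choose (n m : ℕ) :
    ∑ z ∈ range m, ((n : R) - 2 * z) * n.choose z = m * n.choose m := by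
  simp_rw [sub_two_mul_mul_choose_eq_sub]
  simpa using sum_range_sub (fun z : ℕ => (z : R) * n.choose z) m

theorem sum_range_choose_mul_abs_sub_two_mul (a : ℕ) :
    ∑ z ∈ range (2 * a + 1), ((2 * a).choose z : ℝ) * |(2 * a : ℝ) - 2 * z|
      = 2 * a * (2 * a).choose a := by
  set S : ℕ → ℝ := fun m => ∑ z ∈ range m, ((2 * a : ℕ) - 2 * (z : ℝ)) * (2 * a).choose z
  have hS : ∀ m, S m = m * (2 * a).choose m := sum_range_sub_two_mul_mul_choose (2 * a)
  have lower : ∑ z ∈ range a, ((2 * a).choose z : ℝ) * |(2 * a : ℝ) - 2 * z| = S a := by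
    refine sum_congr rfl fun z hz => ?_
    have : (z : ℝ) ≤ a := by exact_mod_cast (mem_range.mp hz).le
    rw [abs_of_nonneg (by linarith)]
    push_cast
    ring
  have upper : ∑ z ∈ Ico a (2 * a + 1), ((2 * a).choose z : ℝ) * |(2 * a : ℝ) - 2 * z|
      = S a - S (2 * a + 1) := by
    rw [← neg_sub, ← sum_Ico_eq_sub _ (by omega), ← sum_neg_distrib]
    refine sum_congr rfl fun z hz => ?_
    have : (a : ℝ) ≤ z := by exact_mod_cast (mem_Ico.mp hz).1
    rw [abs_of_nonpos (by linarith)]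
    push_cast
    ring
  have top : S (2 * a + 1) = 0 := by simp [hS]
  rw [← sum_range_add_sum_Ico _ (by omega : a ≤ 2 * a + 1), lower, upper, top, hS]
  ring

end Nat

theorem factsum0_general (a : ℕ) :
    ∑ z ∈ range (2 * a + 1), ((2 * a).choose z : ℝ) * |1 / 2 - (z : ℝ) / (2 * a)|
      = (1 / 2) * ((2 * a).choose a : ℝ) := by
  rcases Nat.eq_zero_or_pos a with rfl | ha
  · norm_num
  have ha' : (0 : ℝ) < a := by exact_mod_cast ha
  have hterm : ∀ z : ℕ, |1 / 2 - (z : ℝ) / (2 * a)| = |(2 * a : ℝ) - 2 * z| / (4 * a) := by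
    intro z
    rw [show (1 / 2 - (z : ℝ) / (2 * a)) = ((2 * a : ℝ) - 2 * z) / (4 * a) by field_simp; ring,
      abs_div, abs_of_pos (by positivity : (0 : ℝ) < 4 * a)]
  simp_rw [hterm, ← mul_div_assoc, ← sum_div, Nat.sum_range_choose_mul_abs_sub_two_mul]
  field_simp
  ring

/-- **Equation (`eq:factsum0`) of Lemma `lem:factsum`**: for every natural number
`a ≥ 1`, `∑_{z=0}^{2a} binom(2a, z)·|1/2 − z/(2a)| = (1/2)·binom(2a, a)`. -/
theorem factsum0 (a : ℕ) (ha : 1 ≤ a) :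
    ∑ z ∈ range (2 * a + 1), ((2 * a).choose z : ℝ) * |1 / 2 - (z : ℝ) / (2 * a)|
      = (1 / 2) * ((2 * a).choose a : ℝ) :=
  factsum0_general a
end

section
/- For all natural numbers a, b ≥ 1, Σ_{z=0}^{min(a,b)} z / ( (a+z)!·(a−z)!·(b+z)!·(b−z)! ) = a·b / ( 2·(a+b)·(a!)²·(b!)² ), as an identity of rational numbers. -/
open Finset Nat

/-- **Equation (`eq:factsum1`) of Lemma `lem:factsum`**: for all natural numbers
`a, b ≥ 1`,
`∑_{z=0}^{min(a,b)} z/((a+z)!·(a−z)!·(b+z)!·(b−z)!) = a·b/(2·(a+b)·(a!)²·(b!)²)`,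
as an identity of rational numbers. -/
theorem factsum1 (a b : ℕ) (ha : 1 ≤ a) (hb : 1 ≤ b) :
    ∑ z ∈ range (min a b + 1),
        (z : ℚ) / ((a + z)! * (a - z)! * (b + z)! * (b - z)!)
      = (a * b : ℚ) / (2 * (a + b) * (a !) ^ 2 * (b !) ^ 2) := by
  set m := min a b with hm
  set g : ℕ → ℚ := fun z =>
    ((z + a) * (z + b) : ℚ) / (2 * (a + b) * (a + z)! * (a - z)! * (b + z)! * (b - z)!) with hg
  have hab : ((a : ℚ) + b) ≠ 0 := by positivity
  have key : ∀ z ∈ range m,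
      (z : ℚ) / ((a + z)! * (a - z)! * (b + z)! * (b - z)!) = g z - g (z + 1) := by
    intro z hz
    rw [mem_range] at hz
    have hza : z < a := lt_of_lt_of_le hz (min_le_left a b)
    have hzb : z < b := lt_of_lt_of_le hz (min_le_right a b)
    obtain ⟨k, rfl⟩ : ∃ k, a = z + 1 + k := ⟨a - (z + 1), by omega⟩
    obtain ⟨l, rfl⟩ : ∃ l, b = z + 1 + l := ⟨b - (z + 1), by omega⟩
    have e1 : z + 1 + k - z = k + 1 := by omega
    have e2 : z + 1 + l - z = l + 1 := by omega
    have e3 : z + 1 + k - (z + 1) = k := by omega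
    have e4 : z + 1 + l - (z + 1) = l := by omega
    have e5 : z + 1 + k + (z + 1) = (z + 1 + k + z) + 1 := by omega
    have e6 : z + 1 + l + (z + 1) = (z + 1 + l + z) + 1 := by omega
    simp only [hg, e1, e2, e3, e4, e5, e6, Nat.factorial_succ]
    have f1 : ((z + 1 + k + z)! : ℚ) ≠ 0 := by
      exact_mod_cast Nat.factorial_ne_zero _
    have f2 : ((z + 1 + l + z)! : ℚ) ≠ 0 := by
      exact_mod_cast Nat.factorial_ne_zero _
    have f3 : ((k)! : ℚ) ≠ 0 := by exact_mod_cast Nat.factorial_ne_zero _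
    have f4 : ((l)! : ℚ) ≠ 0 := by exact_mod_cast Nat.factorial_ne_zero _
    have f5 : ((z : ℚ) + 1 + k + (z + 1 + l)) ≠ 0 := by positivity
    push_cast
    field_simp
    ring
  have last : (m : ℚ) / ((a + m)! * (a - m)! * (b + m)! * (b - m)!) = g m := by
    have hma : m = a ∨ m = b := by omega
    have fne : ∀ n : ℕ, ((n)! : ℚ) ≠ 0 := fun n => by exact_mod_cast Nat.factorial_ne_zero n
    rcases hma with h | h <;>
    · rw [hg]
      simp only [h]
      rw [div_eq_div_iff (by positivity) (by
        have := fne (a + (if True then a else b))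
        positivity)]
      push_cast
      ring
  rw [Finset.sum_range_succ, Finset.sum_congr rfl key, Finset.sum_range_sub', last]
  simp only [hg]
  simp only [Nat.add_zero, Nat.sub_zero]
  ring_nf
end

section
/- For all natural numbers a, b ≥ 0, Σ_{z=0}^{min(a,b)} (z + 1/2) / ( (a+z+1)!·(a−z)!·(b+z+1)!·(b−z)! ) = 1 / ( 2·(a+b+1)·(a!)²·(b!)² ), as an identity of rational numbers. -/
open Finset Nat

/-
The sum telescopes. With `w n z = invFactorialProd n z = 1 / ((n + z)! (n - z)!)` (zero for
`z > n`) put `G z = w a z * w b z / (2 (a + b + 1))`. Multiplied by the denominator of the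
`z`-th summand, `G z` becomes `(a + z + 1)(b + z + 1) / (2 (a + b + 1))` and `G (z + 1)` becomes
`(a - z)(b - z) / (2 (a + b + 1))`; their difference is `z + 1/2`. So the sum is
`G 0 - G (min a b + 1) = G 0`.
-/

section InvFactorialProd

variable (K : Type*) [Field K]

noncomputable def invFactorialProd (n z : ℕ) : K :=
  if z ≤ n then (((n + z)! * (n - z)! : ℕ) : K)⁻¹ else 0

variable {K}

theorem invFactorialProd_zero_right (n : ℕ) : invFactorialProd K n 0 = ((n ! : K) ^ 2)⁻¹ := by
  simp [invFactorialProd, sq]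

theorem invFactorialProd_of_lt {n z : ℕ} (h : n < z) : invFactorialProd K n z = 0 :=
  if_neg h.not_ge

variable [CharZero K]

theorem factorial_mul_factorial_mul_invFactorialProd {n z : ℕ} (hz : z ≤ n) :
    ((n + z + 1)! * (n - z)! : K) * invFactorialProd K n z = n + z + 1 := by
  rw [invFactorialProd, if_pos hz, factorial_succ]
  push_cast
  rw [mul_assoc _ ((n + z)! : K), mul_inv_cancel_right₀ (by simp [factorial_ne_zero])]

theorem factorial_mul_factorial_mul_invFactorialProd_succ {n z : ℕ} (hz : z ≤ n) :
    ((n + z + 1)! * (n - z)! : K) * invFactorialProd K n (z + 1) = ((n - z : ℕ) : K) := by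
  rcases hz.lt_or_eq with hlt | rfl
  · obtain ⟨m, rfl⟩ : ∃ m, n = z + 1 + m := ⟨n - (z + 1), by omega⟩
    rw [invFactorialProd, if_pos (by omega), show z + 1 + m - z = m + 1 by omega,
      show z + 1 + m - (z + 1) = m by omega, show z + 1 + m + z + 1 = z + 1 + m + (z + 1) by ring,
      factorial_succ m]
    push_cast
    rw [mul_left_comm, mul_assoc, mul_inv_cancel₀ (by simp [factorial_ne_zero]), mul_one]
  · simp [invFactorialProd_of_lt (lt_add_one z)]

end InvFactorialProd

theorem factsum2_term_eq_sub {a b z : ℕ} (hz : z ≤ min a b) :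
    ((z : ℚ) + 1 / 2) / ((a + z + 1)! * (a - z)! * (b + z + 1)! * (b - z)!)
      = invFactorialProd ℚ a z * invFactorialProd ℚ b z / (2 * (a + b + 1))
        - invFactorialProd ℚ a (z + 1) * invFactorialProd ℚ b (z + 1) / (2 * (a + b + 1)) := by
  have hza : z ≤ a := hz.trans (min_le_left a b)
  have hzb : z ≤ b := hz.trans (min_le_right a b)
  have ha := factorial_mul_factorial_mul_invFactorialProd (K := ℚ) hza
  have hb := factorial_mul_factorial_mul_invFactorialProd (K := ℚ) hzb
  have ha' := factorial_mul_factorial_mul_invFactorialProd_succ (K := ℚ) hza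
  have hb' := factorial_mul_factorial_mul_invFactorialProd_succ (K := ℚ) hzb
  rw [Nat.cast_sub hza] at ha'
  rw [Nat.cast_sub hzb] at hb'
  have key : ((a + z + 1)! * (a - z)! * (b + z + 1)! * (b - z)! : ℚ) *
      (invFactorialProd ℚ a z * invFactorialProd ℚ b z
        - invFactorialProd ℚ a (z + 1) * invFactorialProd ℚ b (z + 1))
      = (2 * z + 1) * (a + b + 1) := by
    calc _ = ((a + z + 1)! * (a - z)! * invFactorialProd ℚ a z) *
            ((b + z + 1)! * (b - z)! * invFactorialProd ℚ b z)
          - ((a + z + 1)! * (a - z)! * invFactorialProd ℚ a (z + 1)) *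
            ((b + z + 1)! * (b - z)! * invFactorialProd ℚ b (z + 1)) := by ring
      _ = _ := by rw [ha, hb, ha', hb']; ring
  rw [← sub_div, div_eq_div_iff (by positivity) (by positivity)]
  linear_combination -key


/-- **Equation (`eq:factsum2`) of Lemma `lem:factsum`**: for all natural numbers
`a, b ≥ 0`,
`∑_{z=0}^{min(a,b)} (z+1/2)/((a+z+1)!·(a−z)!·(b+z+1)!·(b−z)!)
  = 1/(2·(a+b+1)·(a!)²·(b!)²)`, as an identity of rational numbers. -/
theorem factsum2 (a b : ℕ) :
    ∑ z ∈ range (min a b + 1),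
        ((z : ℚ) + 1 / 2) / ((a + z + 1)! * (a - z)! * (b + z + 1)! * (b - z)!)
      = 1 / (2 * (a + b + 1) * (a !) ^ 2 * (b !) ^ 2) := by
  rw [sum_congr rfl fun z hz => factsum2_term_eq_sub (Nat.lt_succ_iff.mp (mem_range.mp hz)),
    sum_range_sub', invFactorialProd_zero_right, invFactorialProd_zero_right]
  have hlast : invFactorialProd ℚ a (min a b + 1) * invFactorialProd ℚ b (min a b + 1) = 0 := by
    rcases min_choice a b with h | h <;> rw [h] <;> simp [invFactorialProd_of_lt (lt_add_one _)]
  rw [hlast, zero_div, sub_zero]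
  field_simp
end
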